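/- arXiv:2511.16568 — 3 statements merged into one kernel-verified Lean document; each statement's English description precedes it below -/
import Mathlib

section
/- For k ≥ 1 set r_k = 1/(8k²), η_k = r_k² = 1/(64k⁴), and ψ_k(t) = η_k ρ((t − 1/k)/r_k), where ρ is the explicit C² bump function defined from θ(t) = 6t⁵ − 15t⁴ + 10t³ (ρ = 0 for |t| ≥ 1, ρ(t) = 1 − θ(2|t| − 1) for 1/2 < |t| < 1, ρ = 1 for |t| ≤ 1/2). Define g : [0,1] × ℝ² → ℝ by g(ξ, x) = x₁ + Σ_{k=1}^{∞} ψ_k(x₂)(2·bit_k(ξ) − 1) and f(ξ, x) = max{g(ξ, x), 0} + 35‖x‖². Then: (i) the supports of the ψ_k are pairwise disjoint, so g is well defined and finite valued; (ii) for every ξ ∈ [0,1], g(ξ, ·) is 70-Lipschitz and continuously differentiable with 70-Lipschitz gradient ∇_x g(ξ, x) = (1, Σ_{k=1}^{∞} ψ_k'(x₂)(2·bit_k(ξ) − 1)); (iii) for every ξ ∈ [0,1], f(ξ, ·) is convex on ℝ²; (iv) for every x ∈ ℝ², ∫_0^1 |f(ξ, x)| dξ ≤ |x₁| + 1/64 +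 35‖x‖² < ∞. -/
open MeasureTheory
open scoped NNReal

/-- The `k`-th binary digit of `ξ`: `bit_k(ξ) = ⌊2^k ξ⌋ − 2⌊2^{k−1} ξ⌋`. -/
noncomputable def bitk (k : ℕ) (ξ : ℝ) : ℤ :=
  ⌊(2 : ℝ) ^ k * ξ⌋ - 2 * ⌊(2 : ℝ) ^ (k - 1) * ξ⌋

/-- `θ(t) = 6t⁵ − 15t⁴ + 10t³`. -/
noncomputable def theta (t : ℝ) : ℝ := 6 * t ^ 5 - 15 * t ^ 4 + 10 * t ^ 3

/-- The explicit C² bump function `ρ`. -/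
noncomputable def rho (t : ℝ) : ℝ :=
  if 1 ≤ |t| then 0 else if |t| ≤ 1 / 2 then 1 else 1 - theta (2 * |t| - 1)

/-- `ψ_k(t) = η_k ρ((t − 1/k)/r_k)` with `r_k = 1/(8k²)` and `η_k = 1/(64k⁴)`. -/
noncomputable def psi (k : ℕ) (t : ℝ) : ℝ :=
  (1 / (64 * k ^ 4)) * rho ((t - 1 / k) / (1 / (8 * k ^ 2)))

/-- `g(ξ, x) = x₁ + Σ_{k≥1} ψ_k(x₂)(2·bit_k(ξ) − 1)` on `ℝ²`. -/
noncomputable def gCvx (ξ : ℝ) (x : EuclideanSpace ℝ (Fin 2)) : ℝ :=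
  x 0 + ∑' k : ℕ, psi (k + 1) (x 1) * (2 * (bitk (k + 1) ξ : ℝ) - 1)

/-- `f(ξ, x) = max{g(ξ, x), 0} + 35‖x‖²`. -/
noncomputable def fCvx (ξ : ℝ) (x : EuclideanSpace ℝ (Fin 2)) : ℝ :=
  max (gCvx ξ x) 0 + 35 * ‖x‖ ^ 2

noncomputable def thetad (s : ℝ) : ℝ := 30 * s ^ 4 - 60 * s ^ 3 + 30 * s ^ 2
noncomputable def thetadd (s : ℝ) : ℝ := 120 * s ^ 3 - 180 * s ^ 2 + 60 * s

lemma theta_mem {s : ℝ} (h0 : 0 ≤ s) (h1 : s ≤ 1) : 0 ≤ theta s ∧ theta s ≤ 1 := by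
  constructor
  · unfold theta; nlinarith [sq_nonneg (s - 5/4), pow_nonneg h0 3, sq_nonneg s, mul_nonneg (mul_nonneg h0 h0) h0]
  · unfold theta
    nlinarith [pow_nonneg (by linarith : (0:ℝ) ≤ 1 - s) 3, sq_nonneg s, sq_nonneg (1-s), mul_nonneg (mul_nonneg (by linarith : (0:ℝ) ≤ 1-s) (by linarith : (0:ℝ) ≤ 1-s)) (by linarith : (0:ℝ) ≤ 1-s), sq_nonneg (s*(1-s))]

lemma thetad_mem {s : ℝ} (h0 : 0 ≤ s) (h1 : s ≤ 1) : 0 ≤ thetad s ∧ thetad s ≤ 2 := by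
  have : thetad s = 30 * (s * (1 - s))^2 := by unfold thetad; ring
  constructor
  · rw [this]; positivity
  · rw [this]; nlinarith [sq_nonneg (2*s-1), sq_nonneg (s*(1-s)), mul_nonneg h0 (by linarith : (0:ℝ) ≤ 1-s)]

lemma thetadd_mem {s : ℝ} (h0 : 0 ≤ s) (h1 : s ≤ 1) : |thetadd s| ≤ 15 := by
  have hs : 0 ≤ s * (1 - s) := mul_nonneg h0 (by linarith)
  have hs4 : s * (1 - s) ≤ 1/4 := by nlinarith [sq_nonneg (2*s-1)]
  have habs : |2*s - 1| ≤ 1 := abs_le.2 ⟨by linarith, by linarith⟩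
  have : thetadd s = -60 * (s * (1 - s)) * (2*s - 1) := by unfold thetadd; ring
  rw [this, abs_le]
  rcases abs_le.1 habs with ⟨hl, hr⟩
  constructor <;> nlinarith [mul_nonneg hs hs, sq_nonneg (2*s-1)]

noncomputable def rhod (t : ℝ) : ℝ :=
  if t ≤ -1 then 0 else if t ≤ -1/2 then 2 * thetad (-2*t - 1)
  else if t ≤ 1/2 then 0 else if t ≤ 1 then -2 * thetad (2*t - 1) else 0

noncomputable def rhodd (t : ℝ) : ℝ :=
  if t ≤ -1 then 0 else if t ≤ -1/2 then -4 * thetadd (-2*t - 1)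
  else if t ≤ 1/2 then 0 else if t ≤ 1 then -4 * thetadd (2*t - 1) else 0

-- region descriptions of rho
lemma rho_R1 {t : ℝ} (h : t ≤ -1) : rho t = 0 := by
  have : (1:ℝ) ≤ |t| := by rw [abs_of_nonpos (by linarith)]; linarith
  simp [rho, this]

lemma rho_R5 {t : ℝ} (h : 1 ≤ t) : rho t = 0 := by
  have : (1:ℝ) ≤ |t| := by rw [abs_of_nonneg (by linarith)]; linarith
  simp [rho, this]

lemma rho_R3 {t : ℝ} (h1 : -(1/2) ≤ t) (h2 : t ≤ 1/2) : rho t = 1 := by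
  have habs : |t| ≤ 1/2 := abs_le.2 ⟨by linarith, h2⟩
  have h : ¬ (1:ℝ) ≤ |t| := by push_neg; linarith
  rw [rho, if_neg h, if_pos habs]

lemma theta_one : theta 1 = 1 := by norm_num [theta]
lemma theta_zero : theta 0 = 0 := by norm_num [theta]

lemma rho_R4 {t : ℝ} (h1 : 1/2 ≤ t) (h2 : t ≤ 1) : rho t = 1 - theta (2*t - 1) := by
  have ht : 0 ≤ t := by linarith
  rw [rho, abs_of_nonneg ht]
  rcases eq_or_lt_of_le h2 with h | h
  · rw [h, if_pos le_rfl]; norm_num [theta_one]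
  · rw [if_neg (by push_neg; linarith)]
    rcases eq_or_lt_of_le h1 with h' | h'
    · rw [← h', if_pos le_rfl]; norm_num [theta_zero]
    · rw [if_neg (by push_neg; linarith)]

lemma rho_R2 {t : ℝ} (h1 : -1 ≤ t) (h2 : t ≤ -(1/2)) : rho t = 1 - theta (-2*t - 1) := by
  have ht : t ≤ 0 := by linarith
  rw [rho, abs_of_nonpos ht]
  rcases eq_or_lt_of_le h1 with h | h
  · rw [← h, if_pos (by norm_num)]; norm_num [theta_one]
  · rw [if_neg (by push_neg; linarith)]
    rcases eq_or_lt_of_le h2 with h' | h'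
    · rw [h', if_pos (by norm_num)]; norm_num [theta_zero]
    · rw [if_neg (by push_neg; linarith)]; ring_nf

-- gluing lemma
lemma glue {f p q : ℝ → ℝ} {a b x d : ℝ} (hax : a < x) (hxb : x < b)
    (hp : ∀ t ∈ Set.Icc a x, f t = p t) (hq : ∀ t ∈ Set.Icc x b, f t = q t)
    (hpd : HasDerivAt p d x) (hqd : HasDerivAt q d x) : HasDerivAt f d x := by
  have h1 : HasDerivWithinAt f d (Set.Icc a x) x :=
    (hpd.hasDerivWithinAt).congr hp (hp x ⟨le_of_lt hax, le_refl x⟩)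
  have h2 : HasDerivWithinAt f d (Set.Icc x b) x :=
    (hqd.hasDerivWithinAt).congr hq (hq x ⟨le_refl x, le_of_lt hxb⟩)
  have := h1.union h2
  refine this.hasDerivAt ?_
  have hsub : Set.Ioo a b ⊆ Set.Icc a x ∪ Set.Icc x b := by
    intro y hy
    rcases le_total y x with h | h
    · exact Or.inl ⟨le_of_lt hy.1, h⟩
    · exact Or.inr ⟨h, le_of_lt hy.2⟩
  exact Filter.mem_of_superset (Ioo_mem_nhds hax hxb) hsub

lemma hasDerivAt_theta (s : ℝ) : HasDerivAt theta (thetad s) s := by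
  have h : HasDerivAt (fun t : ℝ => 6 * t ^ 5 - 15 * t ^ 4 + 10 * t ^ 3)
      (6 * (5 * s ^ 4) - 15 * (4 * s ^ 3) + 10 * (3 * s ^ 2)) s :=
    (((hasDerivAt_pow 5 s).const_mul 6).sub ((hasDerivAt_pow 4 s).const_mul 15)).add
      ((hasDerivAt_pow 3 s).const_mul 10)
  have e : (6 * (5 * s ^ 4) - 15 * (4 * s ^ 3) + 10 * (3 * s ^ 2)) = thetad s := by
    unfold thetad; ring
  rw [← e]; exact h

lemma hasDerivAt_thetad (s : ℝ) : HasDerivAt thetad (thetadd s) s := by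
  have h : HasDerivAt (fun t : ℝ => 30 * t ^ 4 - 60 * t ^ 3 + 30 * t ^ 2)
      (30 * (4 * s ^ 3) - 60 * (3 * s ^ 2) + 30 * (2 * s ^ 1)) s :=
    (((hasDerivAt_pow 4 s).const_mul 30).sub ((hasDerivAt_pow 3 s).const_mul 60)).add
      ((hasDerivAt_pow 2 s).const_mul 30)
  have e : (30 * (4 * s ^ 3) - 60 * (3 * s ^ 2) + 30 * (2 * s ^ 1)) = thetadd s := by
    unfold thetadd; ring
  rw [← e]; exact h

lemma hd_p2 (t : ℝ) : HasDerivAt (fun t => 1 - theta (-2*t - 1)) (2 * thetad (-2*t - 1)) t := by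
  have hin : HasDerivAt (fun t : ℝ => -2*t - 1) (-2) t := by
    simpa using ((hasDerivAt_id t).const_mul (-2)).sub_const 1
  have := ((hasDerivAt_theta (-2*t - 1)).comp t hin).const_sub 1
  simpa [mul_comm] using this.congr_deriv (by ring)

lemma hd_p4 (t : ℝ) : HasDerivAt (fun t => 1 - theta (2*t - 1)) (-2 * thetad (2*t - 1)) t := by
  have hin : HasDerivAt (fun t : ℝ => 2*t - 1) 2 t := by
    simpa using ((hasDerivAt_id t).const_mul 2).sub_const 1
  have := ((hasDerivAt_theta (2*t - 1)).comp t hin).const_sub 1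
  simpa [mul_comm] using this.congr_deriv (by ring)

lemma hd2_p2 (t : ℝ) : HasDerivAt (fun t => 2 * thetad (-2*t - 1)) (-4 * thetadd (-2*t - 1)) t := by
  have hin : HasDerivAt (fun t : ℝ => -2*t - 1) (-2) t := by
    simpa using ((hasDerivAt_id t).const_mul (-2)).sub_const 1
  have := ((hasDerivAt_thetad (-2*t - 1)).comp t hin).const_mul 2
  simpa [mul_comm] using this.congr_deriv (by ring)

lemma hd2_p4 (t : ℝ) : HasDerivAt (fun t => -2 * thetad (2*t - 1)) (-4 * thetadd (2*t - 1)) t := by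
  have hin : HasDerivAt (fun t : ℝ => 2*t - 1) 2 t := by
    simpa using ((hasDerivAt_id t).const_mul 2).sub_const 1
  have := ((hasDerivAt_thetad (2*t - 1)).comp t hin).const_mul (-2)
  simpa [mul_comm] using this.congr_deriv (by ring)

lemma thetad_zero : thetad 0 = 0 := by norm_num [thetad]
lemma thetad_one : thetad 1 = 0 := by norm_num [thetad]
lemma thetadd_zero : thetadd 0 = 0 := by norm_num [thetadd]
lemma thetadd_one : thetadd 1 = 0 := by norm_num [thetadd]

lemma rhod_val_R2 {t : ℝ} (h1 : -1 < t) (h2 : t ≤ -(1/2)) : rhod t = 2 * thetad (-2*t - 1) := by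
  rw [rhod, if_neg (by push_neg; linarith), if_pos (by linarith)]

lemma rhod_val_R4 {t : ℝ} (h1 : 1/2 < t) (h2 : t ≤ 1) : rhod t = -2 * thetad (2*t - 1) := by
  rw [rhod, if_neg (by push_neg; linarith), if_neg (by push_neg; linarith),
    if_neg (by push_neg; linarith), if_pos h2]

lemma hasDerivAt_rho (t : ℝ) : HasDerivAt rho (rhod t) t := by
  rcases lt_or_ge t (-1) with h | h
  · have hv : rhod t = 0 := by rw [rhod, if_pos (le_of_lt h)]
    rw [hv]
    exact glue (a := t-1) (b := -1) (by linarith) h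
      (fun s hs => rho_R1 (by linarith [hs.2])) (fun s hs => rho_R1 hs.2)
      (hasDerivAt_const _ _) (hasDerivAt_const _ _)
  rcases eq_or_lt_of_le h with h | h
  · -- t = -1
    have hv : rhod t = 0 := by rw [rhod, if_pos (le_of_eq h.symm)]
    rw [hv, ← h]
    refine glue (a := -2) (b := -(1/2)) (by norm_num) (by norm_num)
      (fun s hs => rho_R1 hs.2) (fun s hs => rho_R2 hs.1 hs.2)
      (hasDerivAt_const _ _) ?_
    have := hd_p2 (-1)
    norm_num [thetad_one] at this ⊢
    exact this
  rcases lt_or_ge t (-(1/2)) with h2 | h2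
  · -- -1 < t < -1/2
    have hv : rhod t = 2 * thetad (-2*t - 1) := rhod_val_R2 h (by linarith)
    rw [hv]
    exact glue (a := -1) (b := -(1/2)) h h2
      (fun s hs => rho_R2 hs.1 (by linarith [hs.2])) (fun s hs => rho_R2 (by linarith [hs.1]) hs.2)
      (hd_p2 t) (hd_p2 t)
  rcases eq_or_lt_of_le h2 with h2 | h2
  · -- t = -1/2
    have hv : rhod t = 0 := by
      rw [rhod_val_R2 h (le_of_eq h2.symm), ← h2]
      norm_num [thetad_zero]
    rw [hv, ← h2]
    refine glue (a := -1) (b := 1/2) (by norm_num) (by norm_num)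
      (fun s hs => rho_R2 hs.1 hs.2) (fun s hs => rho_R3 hs.1 hs.2)
      ?_ (hasDerivAt_const _ _)
    have := hd_p2 (-(1/2))
    norm_num [thetad_zero] at this ⊢
    exact this
  rcases lt_or_ge t (1/2) with h3 | h3
  · -- -1/2 < t < 1/2
    have hv : rhod t = 0 := by
      rw [rhod, if_neg (by push_neg; linarith), if_neg (by push_neg; linarith), if_pos (le_of_lt h3)]
    rw [hv]
    exact glue (a := -(1/2)) (b := 1/2) h2 h3
      (fun s hs => rho_R3 hs.1 (by linarith [hs.2])) (fun s hs => rho_R3 (by linarith [hs.1]) hs.2)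
      (hasDerivAt_const _ _) (hasDerivAt_const _ _)
  rcases eq_or_lt_of_le h3 with h3 | h3
  · -- t = 1/2
    have hv : rhod t = 0 := by
      rw [rhod, if_neg (by push_neg; linarith), if_neg (by push_neg; linarith),
        if_pos (by linarith : t ≤ 1/2)]
    rw [hv, ← h3]
    refine glue (a := -(1/2)) (b := 1) (by norm_num) (by norm_num)
      (fun s hs => rho_R3 hs.1 hs.2) (fun s hs => rho_R4 hs.1 hs.2)
      (hasDerivAt_const _ _) ?_
    have := hd_p4 (1/2)
    norm_num [thetad_zero] at this ⊢
    exact this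
  rcases lt_or_ge t 1 with h4 | h4
  · -- 1/2 < t < 1
    have hv : rhod t = -2 * thetad (2*t - 1) := rhod_val_R4 h3 (le_of_lt h4)
    rw [hv]
    exact glue (a := 1/2) (b := 1) h3 h4
      (fun s hs => rho_R4 hs.1 (by linarith [hs.2])) (fun s hs => rho_R4 (by linarith [hs.1]) hs.2)
      (hd_p4 t) (hd_p4 t)
  rcases eq_or_lt_of_le h4 with h4 | h4
  · -- t = 1
    have hv : rhod t = 0 := by
      rw [← h4, rhod_val_R4 (by norm_num) (by norm_num)]
      norm_num [thetad_one]
    rw [hv, ← h4]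
    refine glue (a := 1/2) (b := 2) (by norm_num) (by norm_num)
      (fun s hs => rho_R4 hs.1 hs.2) (fun s hs => rho_R5 hs.1)
      ?_ (hasDerivAt_const _ _)
    have := hd_p4 1
    norm_num [thetad_one] at this ⊢
    exact this
  · -- t > 1
    have hv : rhod t = 0 := by
      rw [rhod, if_neg (by push_neg; linarith), if_neg (by push_neg; linarith),
        if_neg (by push_neg; linarith), if_neg (by push_neg; linarith)]
    rw [hv]
    exact glue (a := 1) (b := t+1) h4 (by linarith)
      (fun s hs => rho_R5 hs.1) (fun s hs => rho_R5 (by linarith [hs.1]))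
      (hasDerivAt_const _ _) (hasDerivAt_const _ _)

lemma rhod_E1 {t : ℝ} (h : t ≤ -1) : rhod t = 0 := by rw [rhod, if_pos h]

lemma rhod_E2 {t : ℝ} (h1 : -1 ≤ t) (h2 : t ≤ -(1/2)) : rhod t = 2 * thetad (-2*t - 1) := by
  rcases eq_or_lt_of_le h1 with h | h
  · rw [← h, rhod_E1 le_rfl]; norm_num [thetad_one]
  · exact rhod_val_R2 h h2

lemma rhod_E3 {t : ℝ} (h1 : -(1/2) ≤ t) (h2 : t ≤ 1/2) : rhod t = 0 := by
  rcases eq_or_lt_of_le h1 with h | h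
  · rw [rhod_val_R2 (by rw [← h]; norm_num) (le_of_eq h.symm), ← h]; norm_num [thetad_zero]
  · rw [rhod, if_neg (by push_neg; linarith), if_neg (by push_neg; linarith), if_pos h2]

lemma rhod_E4 {t : ℝ} (h1 : 1/2 ≤ t) (h2 : t ≤ 1) : rhod t = -2 * thetad (2*t - 1) := by
  rcases eq_or_lt_of_le h1 with h | h
  · rw [rhod_E3 (by rw [← h]; norm_num) (le_of_eq h.symm), ← h]; norm_num [thetad_zero]
  · exact rhod_val_R4 h h2

lemma rhod_E5 {t : ℝ} (h : 1 ≤ t) : rhod t = 0 := by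
  rcases eq_or_lt_of_le h with h | h
  · rw [rhod_E4 (by rw [← h]; norm_num) (le_of_eq h.symm), ← h]; norm_num [thetad_one]
  · rw [rhod, if_neg (by push_neg; linarith), if_neg (by push_neg; linarith),
      if_neg (by push_neg; linarith), if_neg (by push_neg; linarith)]

lemma hasDerivAt_rhod (t : ℝ) : HasDerivAt rhod (rhodd t) t := by
  rcases lt_or_ge t (-1) with h | h
  · have hv : rhodd t = 0 := by rw [rhodd, if_pos (le_of_lt h)]
    rw [hv]
    exact glue (a := t-1) (b := -1) (by linarith) h
      (fun s hs => rhod_E1 (by linarith [hs.2])) (fun s hs => rhod_E1 hs.2)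
      (hasDerivAt_const _ _) (hasDerivAt_const _ _)
  rcases eq_or_lt_of_le h with h | h
  · have hv : rhodd t = 0 := by rw [rhodd, if_pos (le_of_eq h.symm)]
    rw [hv, ← h]
    refine glue (a := -2) (b := -(1/2)) (by norm_num) (by norm_num)
      (fun s hs => rhod_E1 hs.2) (fun s hs => rhod_E2 hs.1 hs.2)
      (hasDerivAt_const _ _) ?_
    have := hd2_p2 (-1)
    norm_num [thetadd_one] at this ⊢
    exact this
  rcases lt_or_ge t (-(1/2)) with h2 | h2
  · have hv : rhodd t = -4 * thetadd (-2*t - 1) := by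
      rw [rhodd, if_neg (by push_neg; linarith), if_pos (by linarith)]
    rw [hv]
    exact glue (a := -1) (b := -(1/2)) h h2
      (fun s hs => rhod_E2 hs.1 (by linarith [hs.2])) (fun s hs => rhod_E2 (by linarith [hs.1]) hs.2)
      (hd2_p2 t) (hd2_p2 t)
  rcases eq_or_lt_of_le h2 with h2 | h2
  · have hv : rhodd t = 0 := by
      rw [rhodd, if_neg (by push_neg; linarith), if_pos (by linarith : t ≤ -1/2), ← h2]
      norm_num [thetadd_zero]
    rw [hv, ← h2]
    refine glue (a := -1) (b := 1/2) (by norm_num) (by norm_num)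
      (fun s hs => rhod_E2 hs.1 hs.2) (fun s hs => rhod_E3 hs.1 hs.2)
      ?_ (hasDerivAt_const _ _)
    have := hd2_p2 (-(1/2))
    norm_num [thetadd_zero] at this ⊢
    exact this
  rcases lt_or_ge t (1/2) with h3 | h3
  · have hv : rhodd t = 0 := by
      rw [rhodd, if_neg (by push_neg; linarith), if_neg (by push_neg; linarith), if_pos (le_of_lt h3)]
    rw [hv]
    exact glue (a := -(1/2)) (b := 1/2) h2 h3
      (fun s hs => rhod_E3 hs.1 (by linarith [hs.2])) (fun s hs => rhod_E3 (by linarith [hs.1]) hs.2)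
      (hasDerivAt_const _ _) (hasDerivAt_const _ _)
  rcases eq_or_lt_of_le h3 with h3 | h3
  · have hv : rhodd t = 0 := by
      rw [rhodd, if_neg (by push_neg; linarith), if_neg (by push_neg; linarith),
        if_pos (by linarith : t ≤ 1/2)]
    rw [hv, ← h3]
    refine glue (a := -(1/2)) (b := 1) (by norm_num) (by norm_num)
      (fun s hs => rhod_E3 hs.1 hs.2) (fun s hs => rhod_E4 hs.1 hs.2)
      (hasDerivAt_const _ _) ?_
    have := hd2_p4 (1/2)
    norm_num [thetadd_zero] at this ⊢
    exact this
  rcases lt_or_ge t 1 with h4 | h4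
  · have hv : rhodd t = -4 * thetadd (2*t - 1) := by
      rw [rhodd, if_neg (by push_neg; linarith), if_neg (by push_neg; linarith),
        if_neg (by push_neg; linarith), if_pos (le_of_lt h4)]
    rw [hv]
    exact glue (a := 1/2) (b := 1) h3 h4
      (fun s hs => rhod_E4 hs.1 (by linarith [hs.2])) (fun s hs => rhod_E4 (by linarith [hs.1]) hs.2)
      (hd2_p4 t) (hd2_p4 t)
  rcases eq_or_lt_of_le h4 with h4 | h4
  · have hv : rhodd t = 0 := by
      rw [rhodd, if_neg (by push_neg; linarith), if_neg (by push_neg; linarith),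
        if_neg (by push_neg; linarith), if_pos (by linarith : t ≤ 1), ← h4]
      norm_num [thetadd_one]
    rw [hv, ← h4]
    refine glue (a := 1/2) (b := 2) (by norm_num) (by norm_num)
      (fun s hs => rhod_E4 hs.1 hs.2) (fun s hs => rhod_E5 hs.1)
      ?_ (hasDerivAt_const _ _)
    have := hd2_p4 1
    norm_num [thetadd_one] at this ⊢
    exact this
  · have hv : rhodd t = 0 := by
      rw [rhodd, if_neg (by push_neg; linarith), if_neg (by push_neg; linarith),
        if_neg (by push_neg; linarith), if_neg (by push_neg; linarith)]
    rw [hv]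
    exact glue (a := 1) (b := t+1) h4 (by linarith)
      (fun s hs => rhod_E5 hs.1) (fun s hs => rhod_E5 (by linarith [hs.1]))
      (hasDerivAt_const _ _) (hasDerivAt_const _ _)

lemma rho_mem (t : ℝ) : 0 ≤ rho t ∧ rho t ≤ 1 := by
  unfold rho
  split_ifs with h1 h2
  · norm_num
  · norm_num
  · push_neg at h1 h2
    have h0 : (0:ℝ) ≤ 2 * |t| - 1 := by linarith
    have h1' : 2 * |t| - 1 ≤ 1 := by linarith
    have := theta_mem h0 h1'
    constructor <;> linarith [this.1, this.2]

lemma abs_rho_le (t : ℝ) : |rho t| ≤ 1 := by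
  have := rho_mem t; rw [abs_le]; constructor <;> linarith [this.1, this.2]

lemma abs_rhod_le (t : ℝ) : |rhod t| ≤ 4 := by
  unfold rhod
  split_ifs with h1 h2 h3 h4
  · norm_num
  · push_neg at h1
    have := thetad_mem (by linarith : (0:ℝ) ≤ -2*t-1) (by linarith : -2*t-1 ≤ 1)
    rw [abs_le]; constructor <;> linarith [this.1, this.2]
  · norm_num
  · push_neg at h3
    have := thetad_mem (by linarith : (0:ℝ) ≤ 2*t-1) (by linarith : 2*t-1 ≤ 1)
    rw [abs_le]; constructor <;> linarith [this.1, this.2]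
  · norm_num

lemma abs_rhodd_le (t : ℝ) : |rhodd t| ≤ 60 := by
  unfold rhodd
  split_ifs with h1 h2 h3 h4
  · norm_num
  · push_neg at h1
    have := thetadd_mem (by linarith : (0:ℝ) ≤ -2*t-1) (by linarith : -2*t-1 ≤ 1)
    rw [abs_le] at this ⊢; constructor <;> nlinarith [this.1, this.2]
  · norm_num
  · push_neg at h3
    have := thetadd_mem (by linarith : (0:ℝ) ≤ 2*t-1) (by linarith : 2*t-1 ≤ 1)
    rw [abs_le] at this ⊢; constructor <;> nlinarith [this.1, this.2]
  · norm_num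

lemma rho_zero (t : ℝ) (h : 1 ≤ |t|) : rho t = 0 := by rw [rho, if_pos h]

lemma rhod_zero (t : ℝ) (h : 1 ≤ |t|) : rhod t = 0 := by
  rcases abs_le.1 (le_refl |t|) with ⟨hl, hr⟩
  rcases le_or_gt t 0 with ht | ht
  · exact rhod_E1 (by rw [abs_of_nonpos ht] at h; linarith)
  · exact rhod_E5 (by rw [abs_of_pos ht] at h; linarith)

lemma rhodd_zero (t : ℝ) (h : 1 ≤ |t|) : rhodd t = 0 := by
  rcases le_or_gt t 0 with ht | ht
  · rw [abs_of_nonpos ht] at h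
    rw [rhodd, if_pos (by linarith)]
  · rw [abs_of_pos ht] at h
    rcases eq_or_lt_of_le h with h' | h'
    · rw [rhodd, if_neg (by push_neg; linarith), if_neg (by push_neg; linarith),
        if_neg (by push_neg; linarith), if_pos (by linarith), ← h']
      norm_num [thetadd_one]
    · rw [rhodd, if_neg (by push_neg; linarith), if_neg (by push_neg; linarith),
        if_neg (by push_neg; linarith), if_neg (by push_neg; linarith)]

noncomputable def Dpsi (k : ℕ) (t : ℝ) : ℝ :=
  (1 / (8 * (k:ℝ) ^ 2)) * rhod ((t - 1 / k) / (1 / (8 * k ^ 2)))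

noncomputable def DDpsi (k : ℕ) (t : ℝ) : ℝ :=
  rhodd ((t - 1 / (k:ℝ)) / (1 / (8 * k ^ 2)))

lemma kpos {k : ℕ} (hk : 1 ≤ k) : (0:ℝ) < (k:ℝ) := by exact_mod_cast Nat.lt_of_lt_of_le Nat.zero_lt_one hk

lemma hasDerivAt_psi {k : ℕ} (hk : 1 ≤ k) (t : ℝ) : HasDerivAt (psi k) (Dpsi k t) t := by
  have hK : (0:ℝ) < (k:ℝ) := kpos hk
  have hc : (1 / (8 * (k:ℝ) ^ 2)) ≠ 0 := by positivity
  have hin : HasDerivAt (fun t : ℝ => (t - 1 / k) / (1 / (8 * (k:ℝ) ^ 2)))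
      (1 / (1 / (8 * (k:ℝ) ^ 2))) t := by
    exact ((hasDerivAt_id t).sub_const (1/(k:ℝ))).div_const (1 / (8 * (k:ℝ) ^ 2))
  have hcomp := (hasDerivAt_rho ((t - 1 / k) / (1 / (8 * (k:ℝ) ^ 2)))).comp t hin
  have := hcomp.const_mul (1 / (64 * (k:ℝ) ^ 4))
  have e : (1 / (64 * (k:ℝ) ^ 4)) * (rhod ((t - 1 / k) / (1 / (8 * (k:ℝ) ^ 2))) * (1 / (1 / (8 * (k:ℝ) ^ 2)))) = Dpsi k t := by
    rw [Dpsi]; field_simp; ring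
  rw [← e]; exact this

lemma hasDerivAt_Dpsi {k : ℕ} (hk : 1 ≤ k) (t : ℝ) : HasDerivAt (Dpsi k) (DDpsi k t) t := by
  have hK : (0:ℝ) < (k:ℝ) := kpos hk
  have hin : HasDerivAt (fun t : ℝ => (t - 1 / k) / (1 / (8 * (k:ℝ) ^ 2)))
      (1 / (1 / (8 * (k:ℝ) ^ 2))) t := by
    exact ((hasDerivAt_id t).sub_const (1/(k:ℝ))).div_const (1 / (8 * (k:ℝ) ^ 2))
  have hcomp := (hasDerivAt_rhod ((t - 1 / k) / (1 / (8 * (k:ℝ) ^ 2)))).comp t hin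
  have := hcomp.const_mul (1 / (8 * (k:ℝ) ^ 2))
  have e : (1 / (8 * (k:ℝ) ^ 2)) * (rhodd ((t - 1 / k) / (1 / (8 * (k:ℝ) ^ 2))) * (1 / (1 / (8 * (k:ℝ) ^ 2)))) = DDpsi k t := by
    rw [DDpsi]; field_simp
  rw [← e]; exact this

lemma abs_psi_le {k : ℕ} (hk : 1 ≤ k) (t : ℝ) : |psi k t| ≤ 1 / (64 * (k:ℝ) ^ 4) := by
  have hK : (0:ℝ) < (k:ℝ) := kpos hk
  rw [psi, abs_mul, abs_of_pos (by positivity : (0:ℝ) < 1 / (64 * (k:ℝ) ^ 4))]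
  calc 1 / (64 * (k:ℝ) ^ 4) * |rho _| ≤ 1 / (64 * (k:ℝ) ^ 4) * 1 := by
        exact mul_le_mul_of_nonneg_left (abs_rho_le _) (by positivity)
    _ = 1 / (64 * (k:ℝ) ^ 4) := mul_one _

lemma abs_Dpsi_le {k : ℕ} (hk : 1 ≤ k) (t : ℝ) : |Dpsi k t| ≤ 1 / (2 * (k:ℝ) ^ 2) := by
  have hK : (0:ℝ) < (k:ℝ) := kpos hk
  rw [Dpsi, abs_mul, abs_of_pos (by positivity : (0:ℝ) < 1 / (8 * (k:ℝ) ^ 2))]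
  calc 1 / (8 * (k:ℝ) ^ 2) * |rhod _| ≤ 1 / (8 * (k:ℝ) ^ 2) * 4 :=
        mul_le_mul_of_nonneg_left (abs_rhod_le _) (by positivity)
    _ ≤ 1 / (2 * (k:ℝ) ^ 2) := le_of_eq (by field_simp; ring)

lemma abs_DDpsi_le {k : ℕ} (t : ℝ) : |DDpsi k t| ≤ 60 := abs_rhodd_le _

noncomputable def IcK (k : ℕ) : Set ℝ :=
  Set.Icc (1/(k:ℝ) - 1/(8*(k:ℝ)^2)) (1/(k:ℝ) + 1/(8*(k:ℝ)^2))

lemma vanish_outside {k : ℕ} (hk : 1 ≤ k) {t : ℝ} (h : t ∉ IcK k) :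
    psi k t = 0 ∧ Dpsi k t = 0 ∧ DDpsi k t = 0 := by
  have hK : (0:ℝ) < (k:ℝ) := kpos hk
  have hr : (0:ℝ) < 1/(8*(k:ℝ)^2) := by positivity
  have habs : 1 ≤ |(t - 1 / k) / (1 / (8 * (k:ℝ) ^ 2))| := by
    rw [abs_div, abs_of_pos hr, le_div_iff₀ hr, one_mul]
    rw [IcK, Set.mem_Icc, not_and_or] at h
    rcases h with h | h <;> push_neg at h
    · rw [abs_of_neg (by linarith), neg_sub]; linarith
    · rw [abs_of_pos (by linarith)]; linarith
  refine ⟨?_, ?_, ?_⟩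
  · rw [psi, rho_zero _ habs, mul_zero]
  · rw [Dpsi, rhod_zero _ habs, mul_zero]
  · rw [DDpsi, rhodd_zero _ habs]

lemma IcK_lt {k l : ℕ} (hk : 1 ≤ k) (hkl : k < l) :
    1/(l:ℝ) + 1/(8*(l:ℝ)^2) < 1/(k:ℝ) - 1/(8*(k:ℝ)^2) := by
  have hK : (0:ℝ) < (k:ℝ) := kpos hk
  have ha1 : (1:ℝ) ≤ (k:ℝ) := by exact_mod_cast hk
  have hb1 : (k:ℝ) + 1 ≤ (l:ℝ) := by exact_mod_cast hkl
  set a := (k:ℝ); set b := (l:ℝ)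
  have hb : (0:ℝ) < b := by linarith
  have e1 : 1/b + 1/(8*b^2) = (8*b+1)/(8*b^2) := by field_simp
  have e2 : 1/a - 1/(8*a^2) = (8*a-1)/(8*a^2) := by field_simp
  rw [e1, e2, div_lt_div_iff₀ (by positivity) (by positivity)]
  have key : a^2 + b^2 < 8*a*b*(b-a) := by
    nlinarith [mul_nonneg (mul_nonneg (by positivity : (0:ℝ) ≤ 8*b)
        (by linarith : (0:ℝ) ≤ a - 1)) (by linarith : (0:ℝ) ≤ b - a - 1),
      mul_nonneg (by linarith : (0:ℝ) ≤ b - 2) (by linarith : (0:ℝ) ≤ b),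
      mul_nonneg (by linarith : (0:ℝ) ≤ b - a) (by linarith : (0:ℝ) ≤ b + a)]
  nlinarith [key]

lemma IcK_unique {t : ℝ} {k l : ℕ} (hk : 1 ≤ k) (hl : 1 ≤ l)
    (h1 : t ∈ IcK k) (h2 : t ∈ IcK l) : k = l := by
  rcases lt_trichotomy k l with h | h | h
  · exfalso; have := IcK_lt hk h; rw [IcK, Set.mem_Icc] at h1 h2; linarith [h1.1, h2.2]
  · exact h
  · exfalso; have := IcK_lt hl h; rw [IcK, Set.mem_Icc] at h1 h2; linarith [h2.1, h1.2]

noncomputable def bcoef (ξ : ℝ) (k : ℕ) : ℝ := 2 * (bitk (k + 1) ξ : ℝ) - 1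

lemma bitk_mem (ξ : ℝ) (k : ℕ) : 0 ≤ bitk (k + 1) ξ ∧ bitk (k + 1) ξ ≤ 1 := by
  have hk1 : (k + 1) - 1 = k := rfl
  rw [bitk, hk1]
  set y := (2:ℝ) ^ k * ξ with hy
  have h2 : (2:ℝ) ^ (k+1) * ξ = 2 * y := by rw [hy, pow_succ]; ring
  rw [h2]
  constructor
  · have h := Int.floor_le y
    have : ((2 * ⌊y⌋ : ℤ) : ℝ) ≤ 2 * y := by push_cast; linarith
    have := Int.le_floor.mpr this
    omega
  · have h := Int.lt_floor_add_one y
    have : 2 * y < ((2 * ⌊y⌋ + 2 : ℤ) : ℝ) := by push_cast; linarith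
    have := Int.floor_lt.mpr this
    omega

lemma abs_bcoef (ξ : ℝ) (k : ℕ) : |bcoef ξ k| ≤ 1 := by
  obtain ⟨h0, h1⟩ := bitk_mem ξ k
  have h0' : (0:ℝ) ≤ (bitk (k+1) ξ : ℝ) := by exact_mod_cast h0
  have h1' : ((bitk (k+1) ξ : ℝ)) ≤ 1 := by exact_mod_cast h1
  rw [bcoef, abs_le]; constructor <;> linarith

noncomputable def hfun (ξ t : ℝ) : ℝ := ∑' k : ℕ, psi (k+1) t * bcoef ξ k
noncomputable def Dh (ξ t : ℝ) : ℝ := ∑' k : ℕ, Dpsi (k+1) t * bcoef ξ k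

lemma single_support {t : ℝ} (F : ℕ → ℝ) (hF : ∀ k, F k ≠ 0 → t ∈ IcK (k+1)) :
    ∃ k0, ∀ k, k ≠ k0 → F k = 0 := by
  by_cases hE : ∃ k, F k ≠ 0
  · obtain ⟨k0, hk0⟩ := hE
    refine ⟨k0, fun k hk => ?_⟩
    by_contra h
    exact hk (by
      have := IcK_unique (Nat.le_add_left 1 k) (Nat.le_add_left 1 k0) (hF k h) (hF k0 hk0)
      omega)
  · push_neg at hE; exact ⟨0, fun k _ => hE k⟩

lemma summable_single {t : ℝ} (F : ℕ → ℝ) (hF : ∀ k, F k ≠ 0 → t ∈ IcK (k+1)) :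
    Summable F := by
  obtain ⟨k0, h⟩ := single_support F hF
  exact summable_of_ne_finset_zero (s := {k0}) (fun k hk => h k (by simpa using hk))

lemma tsum_single {t : ℝ} (F : ℕ → ℝ) (hF : ∀ k, F k ≠ 0 → t ∈ IcK (k+1)) :
    ∃ k0, (∑' k, F k) = F k0 ∧ ∀ k, k ≠ k0 → F k = 0 := by
  obtain ⟨k0, h⟩ := single_support F hF
  exact ⟨k0, tsum_eq_single k0 h, h⟩

lemma IcK_low {k : ℕ} {s : ℝ} (hs : s ∈ IcK (k+1)) : 7 / (8 * ((k:ℝ)+1)) ≤ s := by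
  have hK : (0:ℝ) < (k:ℝ) + 1 := by positivity
  rw [IcK, Set.mem_Icc] at hs
  have hcast : ((k+1 : ℕ) : ℝ) = (k:ℝ) + 1 := by push_cast; ring
  rw [hcast] at hs
  have h1 : 1/((k:ℝ)+1) - 1/(8*((k:ℝ)+1)^2) ≥ 7/(8*((k:ℝ)+1)) := by
    rw [ge_iff_le, div_sub_div _ _ (by positivity) (by positivity), div_le_div_iff₀ (by positivity) (by positivity)]
    nlinarith [hK]
  linarith [hs.1]

lemma IcK_pos {k : ℕ} {s : ℝ} (hs : s ∈ IcK (k+1)) : 0 < s :=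
  lt_of_lt_of_le (by positivity) (IcK_low hs)

-- pointwise bounds for hfun and Dh
lemma hfun_term_supp (ξ t : ℝ) : ∀ k, psi (k+1) t * bcoef ξ k ≠ 0 → t ∈ IcK (k+1) := by
  intro k h
  by_contra hc
  exact h (by rw [(vanish_outside (Nat.le_add_left 1 k) hc).1, zero_mul])

lemma Dh_term_supp (ξ t : ℝ) : ∀ k, Dpsi (k+1) t * bcoef ξ k ≠ 0 → t ∈ IcK (k+1) := by
  intro k h
  by_contra hc
  exact h (by rw [(vanish_outside (Nat.le_add_left 1 k) hc).2.1, zero_mul])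

lemma abs_mul_bcoef {a ξ : ℝ} {k : ℕ} {B : ℝ} (h : |a| ≤ B) : |a * bcoef ξ k| ≤ B := by
  rw [abs_mul]
  calc |a| * |bcoef ξ k| ≤ B * 1 :=
    mul_le_mul h (abs_bcoef ξ k) (abs_nonneg _) (le_trans (abs_nonneg a) h)
  _ = B := mul_one B

lemma abs_hfun_le (ξ t : ℝ) : |hfun ξ t| ≤ 1/64 := by
  obtain ⟨k0, he, -⟩ := tsum_single _ (hfun_term_supp ξ t)
  rw [hfun, he]
  refine le_trans (abs_mul_bcoef (abs_psi_le (Nat.le_add_left 1 k0) t)) ?_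
  have hK : (1:ℝ) ≤ ((k0+1 : ℕ):ℝ) := by exact_mod_cast Nat.le_add_left 1 k0
  rw [div_le_div_iff₀ (by positivity) (by norm_num)]
  nlinarith [pow_le_pow_left₀ (by norm_num : (0:ℝ) ≤ 1) hK 4, hK]

lemma abs_hfun_le_sq (ξ t : ℝ) : |hfun ξ t| ≤ t^2 := by
  obtain ⟨k0, he, -⟩ := tsum_single _ (hfun_term_supp ξ t)
  rw [hfun, he]
  by_cases h : psi (k0+1) t * bcoef ξ k0 = 0
  · rw [h]; simpa using sq_nonneg t
  · have ht := hfun_term_supp ξ t k0 h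
    have hlow := IcK_low ht
    have hK : (1:ℝ) ≤ (k0:ℝ) + 1 := by linarith [Nat.cast_nonneg (α := ℝ) k0]
    have ht0 : 0 < t := IcK_pos ht
    refine le_trans (abs_mul_bcoef (abs_psi_le (Nat.le_add_left 1 k0) t)) ?_
    have hcast : ((k0+1 : ℕ) : ℝ) = (k0:ℝ) + 1 := by push_cast; ring
    rw [hcast]
    have h2 : (7 / (8 * ((k0:ℝ)+1)))^2 ≤ t^2 := by
      have hpos : (0:ℝ) < 7 / (8 * ((k0:ℝ)+1)) := by positivity
      exact sq_le_sq' (by linarith) hlow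
    refine le_trans ?_ h2
    rw [div_pow, div_le_div_iff₀ (by positivity) (by positivity)]
    nlinarith [pow_le_pow_left₀ (by norm_num : (0:ℝ) ≤ 1) hK 4, sq_nonneg ((k0:ℝ)+1), hK]

lemma abs_Dh_le_one (ξ t : ℝ) : |Dh ξ t| ≤ 1 := by
  obtain ⟨k0, he, -⟩ := tsum_single _ (Dh_term_supp ξ t)
  rw [Dh, he]
  refine le_trans (abs_mul_bcoef (abs_Dpsi_le (Nat.le_add_left 1 k0) t)) ?_
  have hK : (1:ℝ) ≤ ((k0+1 : ℕ):ℝ) := by exact_mod_cast Nat.le_add_left 1 k0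
  rw [div_le_one (by positivity)]
  nlinarith [hK]

lemma abs_Dh_le_sq (ξ t : ℝ) : |Dh ξ t| ≤ t^2 := by
  obtain ⟨k0, he, -⟩ := tsum_single _ (Dh_term_supp ξ t)
  rw [Dh, he]
  by_cases h : Dpsi (k0+1) t * bcoef ξ k0 = 0
  · rw [h]; simpa using sq_nonneg t
  · have ht := Dh_term_supp ξ t k0 h
    have hlow := IcK_low ht
    have hK : (1:ℝ) ≤ (k0:ℝ) + 1 := by linarith [Nat.cast_nonneg (α := ℝ) k0]
    have ht0 : 0 < t := IcK_pos ht
    refine le_trans (abs_mul_bcoef (abs_Dpsi_le (Nat.le_add_left 1 k0) t)) ?_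
    have hcast : ((k0+1 : ℕ) : ℝ) = (k0:ℝ) + 1 := by push_cast; ring
    rw [hcast]
    have h2 : (7 / (8 * ((k0:ℝ)+1)))^2 ≤ t^2 := by
      have hpos : (0:ℝ) < 7 / (8 * ((k0:ℝ)+1)) := by positivity
      exact sq_le_sq' (by linarith) hlow
    refine le_trans ?_ h2
    rw [div_pow, div_le_div_iff₀ (by positivity) (by positivity)]
    nlinarith [sq_nonneg ((k0:ℝ)+1), hK]

lemma not_mem_IcK_of_nonpos {k : ℕ} {s : ℝ} (hs : s ≤ 0) : s ∉ IcK (k+1) :=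
  fun h => absurd (IcK_pos h) (not_lt.2 hs)

lemma loc_N {t : ℝ} (ht : 0 < t) : ∃ N : ℕ, ∀ s : ℝ, t/2 < s → ∀ k, N ≤ k → s ∉ IcK (k+1) := by
  refine ⟨⌈4/t⌉₊, fun s hs k hk hmem => ?_⟩
  have hceil : 4/t ≤ (⌈4/t⌉₊ : ℝ) := Nat.le_ceil _
  have hN : 4/t ≤ ((k:ℝ)) + 1 := by
    have : ((⌈4/t⌉₊ : ℕ):ℝ) ≤ (k:ℝ) := by exact_mod_cast hk
    linarith
  have hK : (0:ℝ) < (k:ℝ) + 1 := by positivity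
  rw [IcK, Set.mem_Icc] at hmem
  have hcast : ((k+1 : ℕ) : ℝ) = (k:ℝ) + 1 := by push_cast; ring
  rw [hcast] at hmem
  have hup : 1/((k:ℝ)+1) + 1/(8*((k:ℝ)+1)^2) ≤ 2/((k:ℝ)+1) := by
    rw [div_add_div _ _ (by positivity) (by positivity), div_le_div_iff₀ (by positivity) (by positivity)]
    nlinarith [hK]
  have h4 : 2/((k:ℝ)+1) ≤ t/2 := by
    rw [div_le_div_iff₀ hK (by norm_num)]
    have h4t : (0:ℝ) < 4/t := by positivity
    have := (div_le_iff₀ ht).1 hN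
    linarith
  linarith [hmem.2]

lemma hfun_loc {ξ t : ℝ} (ht : 0 < t) :
    ∃ N : ℕ, (∀ s : ℝ, t/2 < s → hfun ξ s = ∑ k ∈ Finset.range N, psi (k+1) s * bcoef ξ k) ∧
      (∀ s : ℝ, t/2 < s → Dh ξ s = ∑ k ∈ Finset.range N, Dpsi (k+1) s * bcoef ξ k) ∧
      (∀ s : ℝ, t/2 < s → ∀ k, N ≤ k → s ∉ IcK (k+1)) := by
  obtain ⟨N, hN⟩ := loc_N ht
  refine ⟨N, fun s hs => ?_, fun s hs => ?_, hN⟩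
  · rw [hfun]
    refine tsum_eq_sum (fun k hk => ?_)
    have := hN s hs k (by simpa using hk)
    rw [(vanish_outside (Nat.le_add_left 1 k) this).1, zero_mul]
  · rw [Dh]
    refine tsum_eq_sum (fun k hk => ?_)
    have := hN s hs k (by simpa using hk)
    rw [(vanish_outside (Nat.le_add_left 1 k) this).2.1, zero_mul]

lemma hfun_zero_of_nonpos {ξ t : ℝ} (ht : t ≤ 0) : hfun ξ t = 0 := by
  rw [hfun]
  convert tsum_zero with k
  rw [(vanish_outside (Nat.le_add_left 1 k) (not_mem_IcK_of_nonpos ht)).1, zero_mul]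

lemma Dh_zero_of_nonpos {ξ t : ℝ} (ht : t ≤ 0) : Dh ξ t = 0 := by
  rw [Dh]
  convert tsum_zero with k
  rw [(vanish_outside (Nat.le_add_left 1 k) (not_mem_IcK_of_nonpos ht)).2.1, zero_mul]

lemma littleO_of_sq {f : ℝ → ℝ} (hf : ∀ s, |f s| ≤ s^2) (hf0 : f 0 = 0) :
    HasDerivAt f 0 0 := by
  rw [hasDerivAt_iff_isLittleO]
  rw [Asymptotics.isLittleO_iff]
  intro ε hε
  have : ∀ᶠ s in nhds (0:ℝ), |s| < ε := by
    have := Metric.ball_mem_nhds (0:ℝ) hε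
    filter_upwards [this] with s hs
    simpa [Real.dist_eq] using hs
  filter_upwards [this] with s hs
  simp only [hf0, sub_zero, smul_zero, Real.norm_eq_abs]
  calc |f s| ≤ s^2 := hf s
    _ = |s| * |s| := by rw [← sq_abs s]; ring
    _ ≤ ε * |s| := mul_le_mul_of_nonneg_right (le_of_lt hs) (abs_nonneg s)

lemma hasDerivAt_hfun (ξ t : ℝ) : HasDerivAt (hfun ξ) (Dh ξ t) t := by
  rcases lt_trichotomy t 0 with ht | ht | ht
  · rw [Dh_zero_of_nonpos (le_of_lt ht)]
    have : (fun s => hfun ξ s) =ᶠ[nhds t] (fun _ => (0:ℝ)) := by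
      filter_upwards [Iio_mem_nhds ht] with s hs
      exact hfun_zero_of_nonpos (le_of_lt hs)
    exact (hasDerivAt_const t 0).congr_of_eventuallyEq this
  · subst ht
    rw [Dh_zero_of_nonpos le_rfl]
    exact littleO_of_sq (abs_hfun_le_sq ξ) (hfun_zero_of_nonpos le_rfl)
  · obtain ⟨N, hH, hD, -⟩ := hfun_loc (ξ := ξ) ht
    have hsum : HasDerivAt (fun s => ∑ k ∈ Finset.range N, psi (k+1) s * bcoef ξ k)
        (∑ k ∈ Finset.range N, Dpsi (k+1) t * bcoef ξ k) t := by
      refine HasDerivAt.fun_sum (fun k _ => ?_)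
      exact (hasDerivAt_psi (Nat.le_add_left 1 k) t).mul_const _
    have heq : (fun s => hfun ξ s) =ᶠ[nhds t] (fun s => ∑ k ∈ Finset.range N, psi (k+1) s * bcoef ξ k) := by
      filter_upwards [Ioi_mem_nhds (by linarith : t/2 < t)] with s hs
      exact hH s hs
    rw [hD t (by linarith)]
    exact hsum.congr_of_eventuallyEq heq

lemma sum_bound_single {N : ℕ} (F : ℕ → ℝ) {B : ℝ} (hB : 0 ≤ B)
    (hu : ∀ k l, F k ≠ 0 → F l ≠ 0 → k = l) (hb : ∀ k, |F k| ≤ B) :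
    |∑ k ∈ Finset.range N, F k| ≤ B := by
  by_cases hE : ∃ k ∈ Finset.range N, F k ≠ 0
  · obtain ⟨k0, hk0, hF0⟩ := hE
    rw [Finset.sum_eq_single_of_mem k0 hk0 (fun l _ hl => by
      by_contra h
      exact hl (hu l k0 h hF0))]
    exact hb k0
  · push_neg at hE
    rw [Finset.sum_eq_zero hE, abs_zero]
    exact hB

lemma hasDerivAt_Dh (ξ t : ℝ) : ∃ d, HasDerivAt (Dh ξ) d t ∧ |d| ≤ 60 := by
  rcases lt_trichotomy t 0 with ht | ht | ht
  · refine ⟨0, ?_, by norm_num⟩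
    have : (fun s => Dh ξ s) =ᶠ[nhds t] (fun _ => (0:ℝ)) := by
      filter_upwards [Iio_mem_nhds ht] with s hs
      exact Dh_zero_of_nonpos (le_of_lt hs)
    exact (hasDerivAt_const t 0).congr_of_eventuallyEq this
  · subst ht
    exact ⟨0, littleO_of_sq (abs_Dh_le_sq ξ) (Dh_zero_of_nonpos le_rfl), by norm_num⟩
  · obtain ⟨N, hH, hD, hN⟩ := hfun_loc (ξ := ξ) ht
    refine ⟨∑ k ∈ Finset.range N, DDpsi (k+1) t * bcoef ξ k, ?_, ?_⟩
    · have hsum : HasDerivAt (fun s => ∑ k ∈ Finset.range N, Dpsi (k+1) s * bcoef ξ k)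
          (∑ k ∈ Finset.range N, DDpsi (k+1) t * bcoef ξ k) t := by
        refine HasDerivAt.fun_sum (fun k _ => ?_)
        exact (hasDerivAt_Dpsi (Nat.le_add_left 1 k) t).mul_const _
      have heq : (fun s => Dh ξ s) =ᶠ[nhds t] (fun s => ∑ k ∈ Finset.range N, Dpsi (k+1) s * bcoef ξ k) := by
        filter_upwards [Ioi_mem_nhds (by linarith : t/2 < t)] with s hs
        exact hD s hs
      exact hsum.congr_of_eventuallyEq heq
    · refine sum_bound_single _ (by norm_num) (fun k l hk hl => ?_) (fun k => abs_mul_bcoef (abs_DDpsi_le t))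
      have htk : t ∈ IcK (k+1) := by
        by_contra hc
        exact hk (by rw [(vanish_outside (Nat.le_add_left 1 k) hc).2.2, zero_mul])
      have htl : t ∈ IcK (l+1) := by
        by_contra hc
        exact hl (by rw [(vanish_outside (Nat.le_add_left 1 l) hc).2.2, zero_mul])
      have := IcK_unique (Nat.le_add_left 1 k) (Nat.le_add_left 1 l) htk htl
      omega

lemma diff_hfun (ξ : ℝ) : Differentiable ℝ (hfun ξ) :=
  fun t => (hasDerivAt_hfun ξ t).differentiableAt

lemma deriv_hfun (ξ t : ℝ) : deriv (hfun ξ) t = Dh ξ t := (hasDerivAt_hfun ξ t).deriv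

lemma diff_Dh (ξ : ℝ) : Differentiable ℝ (Dh ξ) := by
  intro t
  obtain ⟨d, hd, -⟩ := hasDerivAt_Dh ξ t
  exact hd.differentiableAt

lemma abs_deriv_Dh_le (ξ t : ℝ) : |deriv (Dh ξ) t| ≤ 60 := by
  obtain ⟨d, hd, hb⟩ := hasDerivAt_Dh ξ t
  rw [hd.deriv]; exact hb

lemma lip_Dh (ξ : ℝ) : LipschitzWith 60 (Dh ξ) := by
  refine lipschitzWith_of_nnnorm_deriv_le (diff_Dh ξ) (fun t => ?_)
  rw [← NNReal.coe_le_coe, coe_nnnorm, Real.norm_eq_abs]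
  exact_mod_cast abs_deriv_Dh_le ξ t

lemma lip_hfun (ξ : ℝ) : LipschitzWith 1 (hfun ξ) := by
  refine lipschitzWith_of_nnnorm_deriv_le (diff_hfun ξ) (fun t => ?_)
  rw [← NNReal.coe_le_coe, coe_nnnorm, Real.norm_eq_abs, deriv_hfun]
  exact_mod_cast abs_Dh_le_one ξ t

lemma convex_phi1 (ξ : ℝ) : ConvexOn ℝ Set.univ (fun t => hfun ξ t + 35*t^2) := by
  have hdiff : Differentiable ℝ (fun t => hfun ξ t + 35*t^2) :=
    (diff_hfun ξ).add (by fun_prop)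
  have hderiv : ∀ t, deriv (fun t => hfun ξ t + 35*t^2) t = Dh ξ t + 70*t := by
    intro t
    have h1 : HasDerivAt (fun t : ℝ => 35*t^2) (70*t) t := by
      have := (hasDerivAt_pow 2 t).const_mul (35:ℝ)
      simpa [mul_comm, mul_assoc] using this.congr_deriv (by ring)
    exact ((hasDerivAt_hfun ξ t).add h1).deriv
  refine Monotone.convexOn_univ_of_deriv hdiff ?_
  have hD2 : Differentiable ℝ (fun t => Dh ξ t + 70*t) :=
    (diff_Dh ξ).add (by fun_prop)
  have hmono : Monotone (fun t => Dh ξ t + 70*t) := by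
    refine monotone_of_deriv_nonneg hD2 (fun t => ?_)
    obtain ⟨d, hd, hb⟩ := hasDerivAt_Dh ξ t
    have h70 : HasDerivAt (fun t : ℝ => 70*t) 70 t := by
      simpa using (hasDerivAt_id t).const_mul (70:ℝ)
    rw [HasDerivAt.deriv (f := fun t => Dh ξ t + 70*t) (hd.add h70)]
    have := abs_le.1 hb
    linarith [this.1]
  have : deriv (fun t => hfun ξ t + 35*t^2) = fun t => Dh ξ t + 70*t := funext hderiv
  rw [this]
  exact hmono

lemma gCvx_eq (ξ : ℝ) (x : EuclideanSpace ℝ (Fin 2)) : gCvx ξ x = x 0 + hfun ξ (x 1) := rfl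

lemma norm_sq_eq (x : EuclideanSpace ℝ (Fin 2)) : ‖x‖^2 = (x 0)^2 + (x 1)^2 := by
  rw [EuclideanSpace.norm_eq, Real.sq_sqrt (by positivity)]
  simp [Fin.sum_univ_two, sq_abs]

lemma coord_abs_le (x : EuclideanSpace ℝ (Fin 2)) (i : Fin 2) : |x i| ≤ ‖x‖ := by
  have h2 : (x i)^2 ≤ ‖x‖^2 := by
    rw [norm_sq_eq]
    fin_cases i <;> simp <;> nlinarith [sq_nonneg (x 0), sq_nonneg (x 1)]
  calc |x i| = Real.sqrt ((x i)^2) := (Real.sqrt_sq_eq_abs _).symm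
    _ ≤ Real.sqrt (‖x‖^2) := Real.sqrt_le_sqrt h2
    _ = ‖x‖ := by rw [Real.sqrt_sq (norm_nonneg x)]

noncomputable def Lmap (d : ℝ) : EuclideanSpace ℝ (Fin 2) →L[ℝ] ℝ :=
  EuclideanSpace.proj 0 + d • EuclideanSpace.proj (1 : Fin 2)

lemma hasFDerivAt_g (ξ : ℝ) (x : EuclideanSpace ℝ (Fin 2)) :
    HasFDerivAt (gCvx ξ) (Lmap (Dh ξ (x 1))) x := by
  have t1 := (EuclideanSpace.proj (0 : Fin 2) (𝕜 := ℝ)).hasFDerivAt (x := x)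
  have t2 := (hasDerivAt_hfun ξ (EuclideanSpace.proj (1 : Fin 2) (𝕜 := ℝ) x)).comp_hasFDerivAt x
    ((EuclideanSpace.proj (1 : Fin 2) (𝕜 := ℝ)).hasFDerivAt (x := x))
  exact t1.add t2

lemma fderiv_g (ξ : ℝ) (x : EuclideanSpace ℝ (Fin 2)) :
    fderiv ℝ (gCvx ξ) x = Lmap (Dh ξ (x 1)) := (hasFDerivAt_g ξ x).fderiv

lemma norm_proj_le : ‖EuclideanSpace.proj (1 : Fin 2) (𝕜 := ℝ)‖ ≤ 1 := by
  refine ContinuousLinearMap.opNorm_le_bound _ zero_le_one (fun y => ?_)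
  rw [one_mul]
  simpa [Real.norm_eq_abs] using coord_abs_le y 1

lemma sub_coord (x y : EuclideanSpace ℝ (Fin 2)) (i : Fin 2) : (x - y) i = x i - y i := rfl

lemma lip_g (ξ : ℝ) : LipschitzWith 70 (gCvx ξ) := by
  refine LipschitzWith.of_dist_le_mul (fun x y => ?_)
  rw [Real.dist_eq, dist_eq_norm]
  have h1 : |x 0 - y 0| ≤ ‖x - y‖ := by
    rw [← sub_coord]; exact coord_abs_le _ 0
  have h2 : |hfun ξ (x 1) - hfun ξ (y 1)| ≤ |x 1 - y 1| := by
    have := (lip_hfun ξ).dist_le_mul (x 1) (y 1)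
    rwa [Real.dist_eq, Real.dist_eq, NNReal.coe_one, one_mul] at this
  have h3 : |x 1 - y 1| ≤ ‖x - y‖ := by
    rw [← sub_coord]; exact coord_abs_le _ 1
  have hc : ((70:ℝ≥0):ℝ) = 70 := by norm_num
  rw [hc, gCvx_eq, gCvx_eq]
  calc |x 0 + hfun ξ (x 1) - (y 0 + hfun ξ (y 1))|
      ≤ |x 0 - y 0| + |hfun ξ (x 1) - hfun ξ (y 1)| := by
        have := abs_add_le (x 0 - y 0) (hfun ξ (x 1) - hfun ξ (y 1))
        calc |x 0 + hfun ξ (x 1) - (y 0 + hfun ξ (y 1))|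
            = |(x 0 - y 0) + (hfun ξ (x 1) - hfun ξ (y 1))| := by ring_nf
          _ ≤ _ := this
    _ ≤ ‖x - y‖ + ‖x - y‖ := add_le_add h1 (le_trans h2 h3)
    _ ≤ 70 * ‖x - y‖ := by nlinarith [norm_nonneg (x - y)]

lemma contDiff_g (ξ : ℝ) : ContDiff ℝ 1 (gCvx ξ) := by
  rw [contDiff_one_iff_fderiv]
  refine ⟨fun x => (hasFDerivAt_g ξ x).differentiableAt, ?_⟩
  rw [show (fderiv ℝ (gCvx ξ)) = (fun x : EuclideanSpace ℝ (Fin 2) => Lmap (Dh ξ (x 1))) from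
    funext (fderiv_g ξ)]
  unfold Lmap
  refine continuous_const.add (Continuous.fun_smul ?_ continuous_const)
  exact (diff_Dh ξ).continuous.comp (EuclideanSpace.proj (1 : Fin 2) (𝕜 := ℝ)).continuous

lemma lip_fderiv_g (ξ : ℝ) : LipschitzWith 70 (fun x => fderiv ℝ (gCvx ξ) x) := by
  refine LipschitzWith.of_dist_le_mul (fun x y => ?_)
  rw [fderiv_g, fderiv_g, dist_eq_norm, dist_eq_norm]
  have hsub : Lmap (Dh ξ (x 1)) - Lmap (Dh ξ (y 1))
      = (Dh ξ (x 1) - Dh ξ (y 1)) • EuclideanSpace.proj (1 : Fin 2) (𝕜 := ℝ) := by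
    rw [Lmap, Lmap, sub_smul]; abel
  rw [hsub, norm_smul]
  have hD : ‖Dh ξ (x 1) - Dh ξ (y 1)‖ ≤ 60 * |x 1 - y 1| := by
    have := (lip_Dh ξ).dist_le_mul (x 1) (y 1)
    rw [Real.dist_eq, Real.dist_eq] at this
    simpa [Real.norm_eq_abs] using this
  have h3 : |x 1 - y 1| ≤ ‖x - y‖ := by rw [← sub_coord]; exact coord_abs_le _ 1
  have hc : ((70:ℝ≥0):ℝ) = 70 := by norm_num
  rw [hc]
  calc ‖Dh ξ (x 1) - Dh ξ (y 1)‖ * ‖EuclideanSpace.proj (1 : Fin 2) (𝕜 := ℝ)‖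
      ≤ (60 * |x 1 - y 1|) * 1 := by
        refine mul_le_mul hD norm_proj_le (norm_nonneg _) (by positivity)
    _ = 60 * |x 1 - y 1| := mul_one _
    _ ≤ 70 * ‖x - y‖ := by nlinarith [abs_nonneg (x 1 - y 1), norm_nonneg (x - y)]

lemma gradient_g (ξ : ℝ) (x : EuclideanSpace ℝ (Fin 2)) :
    gradient (gCvx ξ) x 0 = 1 ∧ gradient (gCvx ξ) x 1 = Dh ξ (x 1) := by
  set v : EuclideanSpace ℝ (Fin 2) := (WithLp.toLp 2 ![1, Dh ξ (x 1)]) with hv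
  have hgrad : HasGradientAt (gCvx ξ) v x := by
    rw [hasGradientAt_iff_hasFDerivAt]
    have he : (InnerProductSpace.toDual ℝ (EuclideanSpace ℝ (Fin 2))) v = Lmap (Dh ξ (x 1)) := by
      ext y
      rw [InnerProductSpace.toDual_apply_apply]
      have : (inner ℝ v y : ℝ) = ∑ i : Fin 2, v i * y i := by
        rw [PiLp.inner_apply]; simp [RCLike.inner_apply]; ring
      rw [this, Fin.sum_univ_two]
      show v 0 * y 0 + v 1 * y 1 = Lmap (Dh ξ (x 1)) y
      have hv0 : v 0 = 1 := rfl
      have hv1 : v 1 = Dh ξ (x 1) := rfl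
      rw [hv0, hv1, one_mul]
      simp [Lmap]
    rw [he]
    exact hasFDerivAt_g ξ x
  have := hgrad.gradient
  rw [this]
  exact ⟨rfl, rfl⟩

lemma convexOn_comp_coord (i : Fin 2) {φ : ℝ → ℝ} (hφ : ConvexOn ℝ Set.univ φ) :
    ConvexOn ℝ Set.univ (fun x : EuclideanSpace ℝ (Fin 2) => φ (x i)) := by
  refine ⟨convex_univ, fun x _ y _ a b ha hb hab => ?_⟩
  have hcoord : (a • x + b • y) i = a * x i + b * y i := rfl
  simp only [hcoord, smul_eq_mul]
  exact hφ.2 (Set.mem_univ _) (Set.mem_univ _) ha hb hab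

lemma convexOn_quad (c : ℝ) (hc : 0 ≤ c) : ConvexOn ℝ Set.univ (fun t : ℝ => c * t^2) := by
  refine ⟨convex_univ, fun x _ y _ a b ha hb hab => ?_⟩
  simp only [smul_eq_mul]
  have hb1 : b = 1 - a := by linarith
  subst hb1
  nlinarith [mul_nonneg (mul_nonneg hc (mul_nonneg ha hb)) (sq_nonneg (x - y))]

lemma convexOn_affine : ConvexOn ℝ Set.univ (fun t : ℝ => t + 35 * t^2) := by
  refine ⟨convex_univ, fun x _ y _ a b ha hb hab => ?_⟩
  simp only [smul_eq_mul]
  have hb1 : b = 1 - a := by linarith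
  subst hb1
  nlinarith [mul_nonneg (mul_nonneg ha hb) (sq_nonneg (x - y))]

lemma convexOn_f (ξ : ℝ) : ConvexOn ℝ Set.univ (fCvx ξ) := by
  have hA : ConvexOn ℝ Set.univ (fun x : EuclideanSpace ℝ (Fin 2) => gCvx ξ x + 35 * ‖x‖^2) := by
    have h0 : ConvexOn ℝ Set.univ (fun x : EuclideanSpace ℝ (Fin 2) => (x 0) + 35 * (x 0)^2) :=
      convexOn_comp_coord 0 convexOn_affine
    have h1 : ConvexOn ℝ Set.univ (fun x : EuclideanSpace ℝ (Fin 2) => hfun ξ (x 1) + 35 * (x 1)^2) :=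
      convexOn_comp_coord 1 (convex_phi1 ξ)
    have e : (fun x : EuclideanSpace ℝ (Fin 2) => gCvx ξ x + 35 * ‖x‖^2)
        = ((fun x : EuclideanSpace ℝ (Fin 2) => (x 0) + 35 * (x 0)^2)
          + (fun x : EuclideanSpace ℝ (Fin 2) => hfun ξ (x 1) + 35 * (x 1)^2)) := by
      funext x; rw [Pi.add_apply, gCvx_eq, norm_sq_eq]; ring
    rw [e]
    exact h0.add h1
  have hB : ConvexOn ℝ Set.univ (fun x : EuclideanSpace ℝ (Fin 2) => 35 * ‖x‖^2) := by
    have h0 : ConvexOn ℝ Set.univ (fun x : EuclideanSpace ℝ (Fin 2) => 35 * (x 0)^2) :=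
      convexOn_comp_coord 0 (convexOn_quad 35 (by norm_num))
    have h1 : ConvexOn ℝ Set.univ (fun x : EuclideanSpace ℝ (Fin 2) => 35 * (x 1)^2) :=
      convexOn_comp_coord 1 (convexOn_quad 35 (by norm_num))
    have e : (fun x : EuclideanSpace ℝ (Fin 2) => 35 * ‖x‖^2)
        = ((fun x : EuclideanSpace ℝ (Fin 2) => 35 * (x 0)^2)
          + (fun x : EuclideanSpace ℝ (Fin 2) => 35 * (x 1)^2)) := by
      funext x; rw [Pi.add_apply, norm_sq_eq]; ring
    rw [e]
    exact h0.add h1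
  have e : fCvx ξ = ((fun x : EuclideanSpace ℝ (Fin 2) => gCvx ξ x + 35 * ‖x‖^2)
      ⊔ (fun x : EuclideanSpace ℝ (Fin 2) => 35 * ‖x‖^2)) := by
    funext x
    simp only [Pi.sup_apply, fCvx]
    rw [← max_add_add_right, zero_add]
  rw [e]
  exact hA.sup hB

lemma fCvx_nonneg (ξ : ℝ) (x : EuclideanSpace ℝ (Fin 2)) : 0 ≤ fCvx ξ x := by
  rw [fCvx]
  have : (0:ℝ) ≤ max (gCvx ξ x) 0 := le_max_right _ _
  nlinarith [sq_nonneg ‖x‖, norm_nonneg x]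

lemma fCvx_le (ξ : ℝ) (x : EuclideanSpace ℝ (Fin 2)) :
    fCvx ξ x ≤ |x 0| + 1/64 + 35 * ‖x‖^2 := by
  rw [fCvx]
  have h1 : gCvx ξ x ≤ |x 0| + 1/64 := by
    rw [gCvx_eq]
    have := abs_hfun_le ξ (x 1)
    have h2 := abs_le.1 this
    have h3 := le_abs_self (x 0)
    linarith [h2.1, h2.2]
  have : max (gCvx ξ x) 0 ≤ |x 0| + 1/64 := by
    apply max_le h1
    positivity
  linarith

lemma integral_bound (x : EuclideanSpace ℝ (Fin 2)) :
    (∫ ξ in Set.Icc (0 : ℝ) 1, |fCvx ξ x|) ≤ |x 0| + 1 / 64 + 35 * ‖x‖ ^ 2 := by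
  set C := |x 0| + 1/64 + 35 * ‖x‖^2 with hC
  have hCnn : 0 ≤ C := by rw [hC]; positivity
  have hbound : ∀ ξ : ℝ, |fCvx ξ x| ≤ C := by
    intro ξ
    rw [abs_of_nonneg (fCvx_nonneg ξ x)]
    exact fCvx_le ξ x
  calc (∫ ξ in Set.Icc (0 : ℝ) 1, |fCvx ξ x|)
      ≤ ∫ _ in Set.Icc (0 : ℝ) 1, C := by
        refine integral_mono_of_nonneg (ae_of_all _ (fun ξ => abs_nonneg _)) ?_
          (ae_of_all _ hbound)
        exact integrable_const C
    _ = C := by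
        rw [setIntegral_const, Real.volume_real_Icc]
        norm_num

lemma tsupport_psi {k : ℕ} (hk : 1 ≤ k) : tsupport (psi k) ⊆ IcK k := by
  refine closure_minimal (fun t ht => ?_) (by rw [IcK]; exact isClosed_Icc)
  by_contra hc
  exact ht (vanish_outside hk hc).1

lemma IcK_disjoint {k l : ℕ} (hk : 1 ≤ k) (hl : 1 ≤ l) (hne : k ≠ l) :
    Disjoint (IcK k) (IcK l) :=
  Set.disjoint_left.mpr (fun t h1 h2 => hne (IcK_unique hk hl h1 h2))


/-- (i) the supports of the `ψ_k` are pairwise disjoint and the series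
defining `g` converges; (ii) for every `ξ ∈ [0,1]`, `g(ξ,·)` is 70-Lipschitz and C¹ with
70-Lipschitz gradient `∇g(ξ,x) = (1, Σ_{k≥1} ψ_k'(x₂)(2 bit_k(ξ) − 1))`; (iii) `f(ξ,·)` is
convex on `ℝ²`; (iv) `∫_0^1 |f(ξ,x)| dξ ≤ |x₁| + 1/64 + 35‖x‖²`. -/
theorem stmt_13 :
    (∀ k l : ℕ, 1 ≤ k → 1 ≤ l → k ≠ l → Disjoint (tsupport (psi k)) (tsupport (psi l))) ∧
      (∀ ξ ∈ Set.Icc (0 : ℝ) 1, ∀ t : ℝ,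
        Summable (fun k : ℕ => psi (k + 1) t * (2 * (bitk (k + 1) ξ : ℝ) - 1))) ∧
      (∀ ξ ∈ Set.Icc (0 : ℝ) 1,
        LipschitzWith 70 (gCvx ξ) ∧ ContDiff ℝ 1 (gCvx ξ) ∧
          LipschitzWith 70 (fun x => fderiv ℝ (gCvx ξ) x) ∧
          ∀ x : EuclideanSpace ℝ (Fin 2),
            gradient (gCvx ξ) x 0 = 1 ∧
              gradient (gCvx ξ) x 1
                = ∑' k : ℕ, deriv (psi (k + 1)) (x 1) * (2 * (bitk (k + 1) ξ : ℝ) - 1)) ∧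
      (∀ ξ ∈ Set.Icc (0 : ℝ) 1, ConvexOn ℝ Set.univ (fCvx ξ)) ∧
      (∀ x : EuclideanSpace ℝ (Fin 2),
        (∫ ξ in Set.Icc (0 : ℝ) 1, |fCvx ξ x|) ≤ |x 0| + 1 / 64 + 35 * ‖x‖ ^ 2) := by
  refine ⟨?_, ?_, ?_, ?_, ?_⟩
  · exact fun k l hk hl hne =>
      (IcK_disjoint hk hl hne).mono (tsupport_psi hk) (tsupport_psi hl)
  · exact fun ξ _ t => summable_single _ (hfun_term_supp ξ t)
  · intro ξ _
    refine ⟨lip_g ξ, contDiff_g ξ, lip_fderiv_g ξ, fun x => ⟨(gradient_g ξ x).1, ?_⟩⟩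
    rw [(gradient_g ξ x).2, Dh]
    exact tsum_congr fun k => by rw [(hasDerivAt_psi (Nat.le_add_left 1 k) (x 1)).deriv, bcoef]
  · exact fun ξ _ => convexOn_f ξ
  · exact integral_bound
end

section
/- With r_k = 1/(8k²), η_k = 1/(64k⁴), ψ_k(t) = η_k ρ((t − 1/k)/r_k) for the explicit C² bump function ρ (ρ = 0 for |t| ≥ 1, ρ(t) = 1 − θ(2|t| − 1) with θ(t) = 6t⁵ − 15t⁴ + 10t³ for 1/2 < |t| < 1, ρ = 1 for |t| ≤ 1/2), g(ξ, x) = x₁ + Σ_{k=1}^{∞} ψ_k(x₂)(2·bit_k(ξ) − 1), and f(ξ, x) = max{g(ξ, x), 0} + 35‖x‖², set p_k = (0, 1/k) ∈ ℝ² and Δ_k = 1/(2240 k⁴). Then for every integer k ≥ 1, every ξ ∈ [0,1], and every y ∈ B(p_k, Δ_k): g(ξ, y) = y₁ + η_k if bit_k(ξ) = 1 and g(ξ, y) = y₁ − η_k if bit_k(ξ) = 0; in particular g(ξ, y) ≠ 0; and f(ξ, ·) is differentiable at y with gradient ∇_x f(ξ, y) = (bit_k(ξ) + 70 y₁, 70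 y₂). -/
open MeasureTheory

/-- `p_k = (0, 1/k) ∈ ℝ²`. -/
noncomputable def pPt (k : ℕ) : EuclideanSpace ℝ (Fin 2) :=
  (WithLp.equiv 2 (Fin 2 → ℝ)).symm ![0, 1 / k]

/-! ### Auxiliary lemmas -/

open scoped RealInnerProductSpace

local notation "E2" => EuclideanSpace ℝ (Fin 2)

lemma bitk_mem_s14 (k : ℕ) (hk : 1 ≤ k) (ξ : ℝ) : bitk k ξ = 0 ∨ bitk k ξ = 1 := by
  have hkk : k = (k - 1) + 1 := (Nat.succ_pred_eq_of_pos hk).symm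
  set m : ℝ := (2 : ℝ) ^ (k - 1) * ξ with hm
  have h2 : (2 : ℝ) ^ k * ξ = 2 * m := by rw [hkk, pow_succ]; ring
  have h3 : 2 * ⌊m⌋ ≤ ⌊2 * m⌋ := by
    apply Int.le_floor.mpr
    push_cast
    nlinarith [Int.floor_le m]
  have h4 : ⌊2 * m⌋ < 2 * ⌊m⌋ + 2 := by
    apply Int.floor_lt.mpr
    push_cast
    nlinarith [Int.lt_floor_add_one m]
  unfold bitk
  rw [h2, ← hm]
  omega

lemma rho_eq_one {s : ℝ} (h : |s| ≤ 1 / 2) : rho s = 1 := by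
  rw [rho, if_neg (by push_neg; linarith), if_pos h]

lemma rho_eq_zero {s : ℝ} (h : 1 ≤ |s|) : rho s = 0 := by
  rw [rho, if_pos h]

lemma psi_ne_eq_zero (k j : ℕ) (hk : 1 ≤ k) (hj : 1 ≤ j) (hjk : j ≠ k) (t : ℝ)
    (ht : |t - 1 / k| ≤ 1 / (1120 * (k : ℝ) ^ 4)) : psi j t = 0 := by
  have hK : (1 : ℝ) ≤ (k : ℝ) := by exact_mod_cast hk
  have hJ : (1 : ℝ) ≤ (j : ℝ) := by exact_mod_cast hj
  set K := (k : ℝ) with hKdef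
  set J := (j : ℝ) with hJdef
  have hK0 : (0 : ℝ) < K := by linarith
  have hJ0 : (0 : ℝ) < J := by linarith
  rw [psi, rho_eq_zero, mul_zero]
  rw [abs_div, abs_of_pos (by positivity : (0:ℝ) < 1 / (8 * J ^ 2)), le_div_iff₀ (by positivity)]
  rw [one_mul]
  have hub : t ≤ 1 / K + 1 / (1120 * K ^ 4) := by
    have := abs_le.mp ht; linarith [this.2]
  have hlb : 1 / K - 1 / (1120 * K ^ 4) ≤ t := by
    have := abs_le.mp ht; linarith [this.1]
  rcases lt_or_gt_of_ne hjk with hlt | hgt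
  · -- j < k : use 1/J - t ≥ 1/(8J²)
    have hJK : J + 1 ≤ K := by
      rw [hKdef, hJdef]; exact_mod_cast Nat.succ_le_of_lt hlt
    refine le_trans ?_ (neg_le_abs _)
    rw [neg_sub]
    have c1 : 1 / K ≤ 1 / (J + 1) := one_div_le_one_div_of_le (by linarith) hJK
    have c2 : 1 / (J + 1) = 1 / J - 1 / (J * (J + 1)) := by
      field_simp
      ring
    have c3 : 1 / (J * (J + 1)) ≥ 1 / (2 * J ^ 2) :=
      one_div_le_one_div_of_le (by positivity) (by nlinarith)
    have hpow : K ^ 2 ≤ K ^ 4 := pow_le_pow_right₀ hK (by norm_num)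
    have c4 : 1 / (1120 * K ^ 4) ≤ 1 / (1120 * J ^ 2) :=
      one_div_le_one_div_of_le (by positivity) (by nlinarith)
    have c5 : 1 / (8 * J ^ 2) + 1 / (1120 * J ^ 2) ≤ 1 / (2 * J ^ 2) := by
      rw [div_add_div _ _ (by positivity) (by positivity),
        div_le_div_iff₀ (by positivity) (by positivity)]
      nlinarith [pow_pos hJ0 4, pow_pos hJ0 2]
    linarith
  · -- j > k : use t - 1/J ≥ 1/(8J²)
    have hKJ : K + 1 ≤ J := by
      rw [hKdef, hJdef]; exact_mod_cast Nat.succ_le_of_lt hgt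
    refine le_trans ?_ (le_abs_self _)
    have c1 : 1 / J ≤ 1 / (K + 1) := one_div_le_one_div_of_le (by linarith) hKJ
    have c2 : 1 / (K + 1) = 1 / K - 1 / (K * (K + 1)) := by
      field_simp
      ring
    have c3 : 1 / (K * (K + 1)) ≥ 1 / (2 * K ^ 2) :=
      one_div_le_one_div_of_le (by positivity) (by nlinarith)
    have c4 : 1 / (8 * J ^ 2) ≤ 1 / (8 * K ^ 2) :=
      one_div_le_one_div_of_le (by positivity) (by nlinarith)
    have hpow : K ^ 2 ≤ K ^ 4 := pow_le_pow_right₀ hK (by norm_num)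
    have c5 : 1 / (1120 * K ^ 4) ≤ 1 / (1120 * K ^ 2) :=
      one_div_le_one_div_of_le (by positivity) (by nlinarith)
    have c6 : 1 / (8 * K ^ 2) + 1 / (1120 * K ^ 2) ≤ 1 / (2 * K ^ 2) := by
      rw [div_add_div _ _ (by positivity) (by positivity),
        div_le_div_iff₀ (by positivity) (by positivity)]
      nlinarith [pow_pos hK0 4, pow_pos hK0 2]
    linarith

lemma psi_eq_eta (k : ℕ) (hk : 1 ≤ k) (t : ℝ)
    (ht : |t - 1 / k| ≤ 1 / (1120 * (k : ℝ) ^ 4)) : psi k t = 1 / (64 * (k : ℝ) ^ 4) := by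
  have hK : (1 : ℝ) ≤ (k : ℝ) := by exact_mod_cast hk
  set K := (k : ℝ) with hKdef
  have hK0 : (0 : ℝ) < K := by linarith
  rw [psi, rho_eq_one, mul_one]
  rw [abs_div, abs_of_pos (by positivity : (0:ℝ) < 1 / (8 * K ^ 2)), div_le_iff₀ (by positivity)]
  have hpow : K ^ 2 ≤ K ^ 4 := pow_le_pow_right₀ hK (by norm_num)
  have h16 : 1 / (1120 * K ^ 4) ≤ 1 / (16 * K ^ 2) :=
    one_div_le_one_div_of_le (by positivity) (by nlinarith)
  have heq : (1 : ℝ) / 2 * (1 / (8 * K ^ 2)) = 1 / (16 * K ^ 2) := by ring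
  linarith

lemma gCvx_eq_s14 (k : ℕ) (hk : 1 ≤ k) (ξ : ℝ) (x : E2)
    (hx : |x 1 - 1 / k| ≤ 1 / (1120 * (k : ℝ) ^ 4)) :
    gCvx ξ x = x 0 + (1 / (64 * (k : ℝ) ^ 4)) * (2 * (bitk k ξ : ℝ) - 1) := by
  rw [gCvx]
  congr 1
  rw [tsum_eq_single (k - 1) (fun j hj => by
    rw [psi_ne_eq_zero k (j + 1) hk (by omega) (by omega) _ hx, zero_mul])]
  have hkk : k - 1 + 1 = k := by omega
  rw [hkk, psi_eq_eta k hk _ hx]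

lemma abs_coord_le (x : E2) (i : Fin 2) : |x i| ≤ ‖x‖ := by
  rw [EuclideanSpace.norm_eq, ← Real.sqrt_sq (abs_nonneg (x i))]
  apply Real.sqrt_le_sqrt
  rw [Fin.sum_univ_two]
  fin_cases i <;> simp [Real.norm_eq_abs, sq_abs] <;>
    nlinarith [sq_nonneg (x 0), sq_nonneg (x 1)]

lemma grad_aux (b c : ℝ) (y : E2) :
    HasGradientAt (fun x : E2 => b * x 0 + c + 35 * ‖x‖ ^ 2)
      ((WithLp.equiv 2 (Fin 2 → ℝ)).symm ![b + 70 * y 0, 70 * y 1]) y := by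
  rw [hasGradientAt_iff_hasFDerivAt]
  have hI : HasFDerivAt (fun x : E2 => ⟪x, x⟫)
      ((fderivInnerCLM ℝ (y, y)).comp
        ((ContinuousLinearMap.id ℝ E2).prod (ContinuousLinearMap.id ℝ E2))) y :=
    (hasFDerivAt_id y).inner ℝ (hasFDerivAt_id y)
  have hp : HasFDerivAt (fun x : E2 => x 0)
      (EuclideanSpace.proj (0 : Fin 2) : E2 →L[ℝ] ℝ) y := by
    exact (EuclideanSpace.proj (0 : Fin 2) : E2 →L[ℝ] ℝ).hasFDerivAt
  have h := ((hp.const_mul b).add_const c).add (hI.const_mul 35)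
  simp only [real_inner_self_eq_norm_sq] at h
  refine h.congr_fderiv ?_
  ext v
  simp only [InnerProductSpace.toDual_apply_apply, ContinuousLinearMap.add_apply,
    ContinuousLinearMap.smul_apply, ContinuousLinearMap.comp_apply,
    ContinuousLinearMap.prod_apply, ContinuousLinearMap.id_apply,
    fderivInnerCLM_apply, PiLp.inner_apply, PiLp.proj_apply,
    RCLike.inner_apply, conj_trivial, Fin.sum_univ_two, smul_eq_mul,
    WithLp.equiv_symm_apply, PiLp.toLp_apply, Matrix.cons_val_zero, Matrix.cons_val_one, Matrix.head_cons]
  ring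

/-- for every `k ≥ 1`, `ξ ∈ [0,1]`, and `y ∈ B(p_k, Δ_k)` with
`Δ_k = 1/(2240k⁴)`: `g(ξ,y) = y₁ + η_k` if `bit_k(ξ) = 1`, `g(ξ,y) = y₁ − η_k` if
`bit_k(ξ) = 0`; in particular `g(ξ,y) ≠ 0`; and `f(ξ,·)` is differentiable at `y` with
gradient `(bit_k(ξ) + 70y₁, 70y₂)`. -/
theorem stmt_14 (k : ℕ) (hk : 1 ≤ k) (ξ : ℝ) (hξ : ξ ∈ Set.Icc (0 : ℝ) 1)
    (y : EuclideanSpace ℝ (Fin 2)) (hy : y ∈ Metric.closedBall (pPt k) (1 / (2240 * k ^ 4))) :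
    (bitk k ξ = 1 → gCvx ξ y = y 0 + 1 / (64 * k ^ 4)) ∧
      (bitk k ξ = 0 → gCvx ξ y = y 0 - 1 / (64 * k ^ 4)) ∧
      gCvx ξ y ≠ 0 ∧
      DifferentiableAt ℝ (fCvx ξ) y ∧
      gradient (fCvx ξ) y 0 = (bitk k ξ : ℝ) + 70 * y 0 ∧
      gradient (fCvx ξ) y 1 = 70 * y 1 := by
  have hK : (1 : ℝ) ≤ (k : ℝ) := by exact_mod_cast hk
  have hK0 : (0 : ℝ) < (k : ℝ) := by linarith
  have hdist : dist y (pPt k) ≤ 1 / (2240 * (k : ℝ) ^ 4) := Metric.mem_closedBall.mp hy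
  have hp0 : pPt k 0 = 0 := by simp [pPt]
  have hp1 : pPt k 1 = 1 / (k : ℝ) := by simp [pPt]
  have hcoord : ∀ i : Fin 2, |y i - pPt k i| ≤ 1 / (2240 * (k : ℝ) ^ 4) := by
    intro i
    calc |y i - pPt k i| = |(y - pPt k) i| := by simp
    _ ≤ ‖y - pPt k‖ := abs_coord_le _ i
    _ = dist y (pPt k) := (dist_eq_norm _ _).symm
    _ ≤ _ := hdist
  have hy0 : |y 0| ≤ 1 / (2240 * (k : ℝ) ^ 4) := by
    have := hcoord 0; rwa [hp0, sub_zero] at this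
  have hy1 : |y 1 - 1 / (k : ℝ)| ≤ 1 / (2240 * (k : ℝ) ^ 4) := by
    have := hcoord 1; rwa [hp1] at this
  have hhalf : 1 / (2240 * (k : ℝ) ^ 4) ≤ 1 / (1120 * (k : ℝ) ^ 4) :=
    one_div_le_one_div_of_le (by positivity) (by nlinarith [pow_pos hK0 4])
  have hsmall : 1 / (2240 * (k : ℝ) ^ 4) < 1 / (64 * (k : ℝ) ^ 4) :=
    one_div_lt_one_div_of_lt (by positivity) (by nlinarith [pow_pos hK0 4])
  have hy1' : |y 1 - 1 / (k : ℝ)| ≤ 1 / (1120 * (k : ℝ) ^ 4) := hy1.trans hhalf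
  have hgy := gCvx_eq_s14 k hk ξ y hy1'
  -- continuity facts
  have hc1 : Continuous (fun x : E2 => x 1) := by
    exact (EuclideanSpace.proj (1 : Fin 2) : E2 →L[ℝ] ℝ).continuous
  have hc0 : Continuous (fun x : E2 => x 0) := by
    exact (EuclideanSpace.proj (0 : Fin 2) : E2 →L[ℝ] ℝ).continuous
  have e1 : ∀ᶠ x : E2 in nhds y, |x 1 - 1 / (k : ℝ)| ≤ 1 / (1120 * (k : ℝ) ^ 4) := by
    have hlt : |y 1 - 1 / (k : ℝ)| < 1 / (1120 * (k : ℝ) ^ 4) :=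
      lt_of_le_of_lt hy1 (lt_of_lt_of_le (by
        apply one_div_lt_one_div_of_lt (by positivity)
        nlinarith [pow_pos hK0 4]) le_rfl)
    have := (((hc1.sub continuous_const).abs).continuousAt (x := y)).eventually_lt
      continuousAt_const hlt
    filter_upwards [this] with x hx using hx.le
  have hbm := bitk_mem_s14 k hk ξ
  rcases hbm with hb | hb
  · -- bit = 0 : g = y 0 - η < 0
    have hgval : gCvx ξ y = y 0 - 1 / (64 * (k : ℝ) ^ 4) := by
      rw [hgy, hb]; push_cast; ring
    have hneg : gCvx ξ y < 0 := by
      rw [hgval]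
      have := abs_le.mp hy0
      linarith [this.2]
    have e2 : ∀ᶠ x : E2 in nhds y,
        x 0 - 1 / (64 * (k : ℝ) ^ 4) < 0 := by
      have hlt : y 0 - 1 / (64 * (k : ℝ) ^ 4) < 0 := by rw [← hgval]; exact hneg
      exact ((hc0.sub continuous_const).continuousAt (x := y)).eventually_lt
        continuousAt_const hlt
    have hev : fCvx ξ =ᶠ[nhds y] fun x : E2 => (0 : ℝ) * x 0 + 0 + 35 * ‖x‖ ^ 2 := by
      filter_upwards [e1, e2] with x h1 h2
      rw [fCvx, gCvx_eq_s14 k hk ξ x h1, hb]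
      push_cast
      rw [max_eq_right (by linarith [h2])]
      ring
    have hgrad : HasGradientAt (fCvx ξ)
        ((WithLp.equiv 2 (Fin 2 → ℝ)).symm ![(0:ℝ) + 70 * y 0, 70 * y 1]) y :=
      (grad_aux 0 0 y).congr_of_eventuallyEq hev
    refine ⟨fun h => by rw [hb] at h; exact absurd h (by norm_num),
      fun _ => hgval, by rw [hgval]; intro h; linarith [hneg, hgval ▸ h],
      hgrad.differentiableAt, ?_, ?_⟩
    · rw [hgrad.gradient, hb]
      simp [WithLp.equiv_symm_apply, PiLp.toLp_apply]
    · rw [hgrad.gradient]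
      simp [WithLp.equiv_symm_apply, PiLp.toLp_apply]
  · -- bit = 1 : g = y 0 + η > 0
    have hgval : gCvx ξ y = y 0 + 1 / (64 * (k : ℝ) ^ 4) := by
      rw [hgy, hb]; push_cast; ring
    have hpos : 0 < gCvx ξ y := by
      rw [hgval]
      have := abs_le.mp hy0
      linarith [this.1]
    have e2 : ∀ᶠ x : E2 in nhds y,
        0 < x 0 + 1 / (64 * (k : ℝ) ^ 4) := by
      have hlt : 0 < y 0 + 1 / (64 * (k : ℝ) ^ 4) := by rw [← hgval]; exact hpos
      exact continuousAt_const.eventually_lt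
        ((hc0.add continuous_const).continuousAt (x := y)) hlt
    have hev : fCvx ξ =ᶠ[nhds y]
        fun x : E2 => (1 : ℝ) * x 0 + 1 / (64 * (k : ℝ) ^ 4) + 35 * ‖x‖ ^ 2 := by
      filter_upwards [e1, e2] with x h1 h2
      rw [fCvx, gCvx_eq_s14 k hk ξ x h1, hb]
      push_cast
      rw [max_eq_left (by linarith [h2])]
      ring
    have hgrad : HasGradientAt (fCvx ξ)
        ((WithLp.equiv 2 (Fin 2 → ℝ)).symm ![(1:ℝ) + 70 * y 0, 70 * y 1]) y :=
      (grad_aux 1 (1 / (64 * (k : ℝ) ^ 4)) y).congr_of_eventuallyEq hev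
    refine ⟨fun _ => hgval, fun h => by rw [hb] at h; exact absurd h (by norm_num),
      by intro h; linarith [hgval ▸ h, hpos],
      hgrad.differentiableAt, ?_, ?_⟩
    · rw [hgrad.gradient, hb]
      simp [WithLp.equiv_symm_apply, PiLp.toLp_apply]
    · rw [hgrad.gradient]
      simp [WithLp.equiv_symm_apply, PiLp.toLp_apply]
end

section
/- Let (Ξ, A) be a measurable space and ξ^1, ξ^2, … be Ξ-valued i.i.d. random variables on a complete probability space (Ω, F, P). Let f : Ξ × ℝ → ℝ be a Carathéodory function such that, for every ξ ∈ Ξ, f(ξ, ·) is convex and L(ξ)-Lipschitz with L : Ξ → [0,∞) measurable and E[L(ξ^1)] < ∞. For ξ ∈ Ξ and x ∈ ℝ, let φ(ξ, x) = lim_{t↓0} (f(ξ, x + t) − f(ξ, x))/t denote the right derivative of f(ξ, ·) at x (which exists by convexity, and satisfies |φ(ξ, x)| ≤ L(ξ)). Then, P-almost surely, lim_{ν→∞} sup_{x ∈ ℝ} | E[φ(ξ^1, x)] − (1/ν) Σ_{i=1}^{ν} φ(ξ^i, x) | = 0. -/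
open MeasureTheory ProbabilityTheory Filter

section Aux
open Topology Set

private lemma ev_abs_sub_le {u : ℕ → ℝ} {l : ℝ} (h : Tendsto u atTop (nhds l)) {ε : ℝ}
    (hε : 0 < ε) : ∀ᶠ n in atTop, |u n - l| ≤ ε := by
  have := h.eventually (Metric.closedBall_mem_nhds l hε)
  simpa [Metric.mem_closedBall, Real.dist_eq] using this

private lemma unif_tendsto
    (g gl gr : ℝ → ℝ) (b t : ℝ)
    (gn gln grn : ℕ → ℝ → ℝ) (bn tn : ℕ → ℝ)
    (hg : Monotone g) (hgn : ∀ n, Monotone (gn n))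
    (hgl : ∀ x, Tendsto g (nhdsWithin x (Iio x)) (nhds (gl x)))
    (hgr : ∀ x, Tendsto g (nhdsWithin x (Ioi x)) (nhds (gr x)))
    (hb : Tendsto g atBot (nhds b)) (ht : Tendsto g atTop (nhds t))
    (hgln : ∀ n x, Tendsto (gn n) (nhdsWithin x (Iio x)) (nhds (gln n x)))
    (hgrn : ∀ n x, Tendsto (gn n) (nhdsWithin x (Ioi x)) (nhds (grn n x)))
    (hbn : ∀ n, Tendsto (gn n) atBot (nhds (bn n)))
    (htn : ∀ n, Tendsto (gn n) atTop (nhds (tn n)))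
    (D : Set ℝ) (hD : Set.range ((↑) : ℚ → ℝ) ⊆ D) (hD2 : {x | ¬ ContinuousAt g x} ⊆ D)
    (hptc : ∀ x ∈ D, Tendsto (fun n => gn n x) atTop (nhds (g x)))
    (hlc : ∀ x ∈ D, Tendsto (fun n => gln n x) atTop (nhds (gl x)))
    (hrc : ∀ x ∈ D, Tendsto (fun n => grn n x) atTop (nhds (gr x)))
    (hbc : Tendsto bn atTop (nhds b)) (htc : Tendsto tn atTop (nhds t)) :
    Tendsto (fun n => ⨆ x : ℝ, |g x - gn n x|) atTop (nhds 0) := by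
  have key : ∀ ε : ℝ, 0 < ε → ∀ᶠ n in atTop, ∀ x : ℝ, |gn n x - g x| ≤ 2 * ε := by
    intro ε hε
    -- tail cutoffs
    obtain ⟨A₀, hA₀⟩ := eventually_atBot.1 (hb.eventually_lt_const (lt_add_of_pos_right b hε))
    obtain ⟨A, hA⟩ := exists_rat_lt A₀
    have hgA : g A ≤ b + ε := (hA₀ A hA.le).le
    obtain ⟨B₀, hB₀⟩ := eventually_atTop.1 (ht.eventually_const_lt (sub_lt_self t hε))
    obtain ⟨B', hB'⟩ := exists_rat_gt B₀
    set B : ℚ := max B' A with hBdef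
    have hB'B : (B' : ℝ) ≤ (B : ℝ) := by exact_mod_cast le_max_left B' A
    have hgB : t - ε ≤ g B := (hB₀ B (le_trans hB'.le hB'B)).le
    have hAB : (A : ℝ) ≤ (B : ℝ) := by exact_mod_cast le_max_right B' A
    -- local covers
    have cover : ∀ z : ℝ, ∃ pq : ℝ × ℝ, pq.1 ∈ Set.range ((↑) : ℚ → ℝ) ∧
        pq.2 ∈ Set.range ((↑) : ℚ → ℝ) ∧ pq.1 < z ∧ z < pq.2 ∧
        gl z - g pq.1 ≤ ε ∧ g pq.2 - gr z ≤ ε ∧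
        (¬ ContinuousAt g z ∨ g pq.2 - g pq.1 ≤ ε) := by
      intro z
      have hglz : gl z ≤ g z := by
        refine le_of_tendsto (hgl z) ?_
        filter_upwards [self_mem_nhdsWithin] with y hy using hg (le_of_lt hy)
      have hgrz : g z ≤ gr z := by
        refine ge_of_tendsto (hgr z) ?_
        filter_upwards [self_mem_nhdsWithin] with y hy using hg (le_of_lt hy)
      by_cases hc : ContinuousAt g z
      · have h1 : ∀ᶠ y in nhds z, g y < g z + ε/2 :=
          hc.eventually_lt_const (by linarith)
        have h2 : ∀ᶠ y in nhds z, g z - ε/2 < g y :=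
          hc.eventually_const_lt (by linarith)
        obtain ⟨δ, hδ, hball⟩ := Metric.eventually_nhds_iff.1 (h1.and h2)
        obtain ⟨p, hp1, hp2⟩ := exists_rat_btwn (show z - δ < z by linarith)
        obtain ⟨q, hq1, hq2⟩ := exists_rat_btwn (show z < z + δ by linarith)
        have hdp : dist (p : ℝ) z < δ := by
          rw [Real.dist_eq, abs_lt]; constructor <;> linarith
        have hdq : dist (q : ℝ) z < δ := by
          rw [Real.dist_eq, abs_lt]; constructor <;> linarith
        have hgp : g z - ε/2 < g p := (hball hdp).2
        have hgq : g q < g z + ε/2 := (hball hdq).1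
        exact ⟨⟨(p : ℝ), (q : ℝ)⟩, ⟨p, rfl⟩, ⟨q, rfl⟩, hp2, hq1,
          by dsimp only; linarith, by dsimp only; linarith, Or.inr (by dsimp only; linarith)⟩
      · have h1 : ∀ᶠ y in nhdsWithin z (Iio z), gl z - ε < g y :=
          (hgl z).eventually_const_lt (by linarith)
        obtain ⟨y, hy1, hy2⟩ := (h1.and self_mem_nhdsWithin).exists
        obtain ⟨p, hp1, hp2⟩ := exists_rat_btwn (show y < z from hy2)
        have h3 : ∀ᶠ y in nhdsWithin z (Ioi z), g y < gr z + ε :=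
          (hgr z).eventually_lt_const (by linarith)
        obtain ⟨y', hy'1, hy'2⟩ := (h3.and self_mem_nhdsWithin).exists
        obtain ⟨q, hq1, hq2⟩ := exists_rat_btwn (show z < y' from hy'2)
        refine ⟨⟨(p : ℝ), (q : ℝ)⟩, ⟨p, rfl⟩, ⟨q, rfl⟩, hp2, hq1, ?_, ?_, Or.inl hc⟩
        · have := hg hp1.le; dsimp only; linarith
        · have := hg hq2.le; dsimp only; linarith
    choose pq hpD hqD hpz hzq hglp hgrq hcase using cover
    obtain ⟨s, hs⟩ := isCompact_Icc.elim_finite_subcover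
      (fun z : ℝ => Ioo (pq z).1 (pq z).2) (fun z => isOpen_Ioo)
      (fun x (hx : x ∈ Icc (A : ℝ) (B : ℝ)) => mem_iUnion.2 ⟨x, mem_Ioo.2 ⟨hpz x, hzq x⟩⟩)
    have evA : ∀ᶠ n in atTop, |gn n A - g A| ≤ ε := ev_abs_sub_le (hptc _ (hD ⟨A, rfl⟩)) hε
    have evB : ∀ᶠ n in atTop, |gn n B - g B| ≤ ε := ev_abs_sub_le (hptc _ (hD ⟨B, rfl⟩)) hε
    have evb : ∀ᶠ n in atTop, |bn n - b| ≤ ε := ev_abs_sub_le hbc hε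
    have evt : ∀ᶠ n in atTop, |tn n - t| ≤ ε := ev_abs_sub_le htc hε
    have evs : ∀ᶠ n in atTop, ∀ z ∈ s,
        |gn n (pq z).1 - g (pq z).1| ≤ ε ∧ |gn n (pq z).2 - g (pq z).2| ≤ ε ∧
        (¬ ContinuousAt g z →
          (|gln n z - gl z| ≤ ε ∧ |grn n z - gr z| ≤ ε ∧ |gn n z - g z| ≤ ε)) := by
      rw [Finset.eventually_all]
      intro z hz
      refine (ev_abs_sub_le (hptc _ (hD (hpD z))) hε).and
        ((ev_abs_sub_le (hptc _ (hD (hqD z))) hε).and ?_)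
      by_cases hc : ContinuousAt g z
      · exact Eventually.of_forall fun n h => absurd hc h
      · have hzD : z ∈ D := hD2 hc
        filter_upwards [ev_abs_sub_le (hlc z hzD) hε, ev_abs_sub_le (hrc z hzD) hε,
          ev_abs_sub_le (hptc z hzD) hε] with n h1 h2 h3 _
        exact ⟨h1, h2, h3⟩
    filter_upwards [evA, evB, evb, evt, evs] with n hA' hB' hb' ht' hs' x
    have hbnle : ∀ y : ℝ, bn n ≤ gn n y := fun y =>
      le_of_tendsto (hbn n) (eventually_atBot.2 ⟨y, fun z hz => hgn n hz⟩)
    have hletn : ∀ y : ℝ, gn n y ≤ tn n := fun y =>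
      ge_of_tendsto (htn n) (eventually_atTop.2 ⟨y, fun z hz => hgn n hz⟩)
    have hble : ∀ y : ℝ, b ≤ g y := fun y =>
      le_of_tendsto hb (eventually_atBot.2 ⟨y, fun z hz => hg hz⟩)
    have hlet : ∀ y : ℝ, g y ≤ t := fun y =>
      ge_of_tendsto ht (eventually_atTop.2 ⟨y, fun z hz => hg hz⟩)
    rw [abs_le] at hA' hB' hb' ht' ⊢
    rcases le_or_gt x A with hxA | hxA
    · have h1 : gn n x ≤ gn n A := hgn n hxA
      have h2 : bn n ≤ gn n x := hbnle x
      have h3 : b ≤ g x := hble x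
      have h4 : g x ≤ g A := hg hxA
      constructor <;> linarith [hA'.1, hA'.2, hb'.1, hb'.2]
    rcases le_or_gt (B : ℝ) x with hxB | hxB
    · have h1 : gn n B ≤ gn n x := hgn n hxB
      have h2 : gn n x ≤ tn n := hletn x
      have h3 : g B ≤ g x := hg hxB
      have h4 : g x ≤ t := hlet x
      constructor <;> linarith [hB'.1, hB'.2, ht'.1, ht'.2]
    have hx : x ∈ Icc (A : ℝ) (B : ℝ) := ⟨hxA.le, hxB.le⟩
    obtain ⟨z, hzs, hxz⟩ := mem_iUnion₂.1 (hs hx)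
    obtain ⟨h1, h2, h3⟩ := hs' z hzs
    rw [abs_le] at h1 h2
    have hpx : g (pq z).1 ≤ g x := hg hxz.1.le
    have hxq : g x ≤ g (pq z).2 := hg hxz.2.le
    have hpxn : gn n (pq z).1 ≤ gn n x := hgn n hxz.1.le
    have hxqn : gn n x ≤ gn n (pq z).2 := hgn n hxz.2.le
    rcases hcase z with hdisc | hcont
    · obtain ⟨hl', hr', hz'⟩ := h3 hdisc
      rw [abs_le] at hl' hr' hz'
      rcases lt_trichotomy x z with hlt | heq | hgt
      · have e1 : gn n x ≤ gln n z := by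
          refine ge_of_tendsto (hgln n z) ?_
          filter_upwards [Ioo_mem_nhdsLT hlt] with y hy using hgn n hy.1.le
        have e2 : g x ≤ gl z := by
          refine ge_of_tendsto (hgl z) ?_
          filter_upwards [Ioo_mem_nhdsLT hlt] with y hy using hg hy.1.le
        have e3 := hglp z
        constructor <;> linarith [hl'.1, hl'.2, h1.1, h1.2]
      · subst heq
        constructor <;> linarith [hz'.1, hz'.2]
      · have e1 : grn n z ≤ gn n x := by
          refine le_of_tendsto (hgrn n z) ?_
          filter_upwards [Ioo_mem_nhdsGT hgt] with y hy using hgn n hy.2.le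
        have e2 : gr z ≤ g x := by
          refine le_of_tendsto (hgr z) ?_
          filter_upwards [Ioo_mem_nhdsGT hgt] with y hy using hg hy.2.le
        have e3 := hgrq z
        constructor <;> linarith [hr'.1, hr'.2, h2.1, h2.2]
    · constructor <;> linarith [h1.1, h1.2, h2.1, h2.2]
  rw [Metric.tendsto_atTop]
  intro ε hε
  obtain ⟨N, hN⟩ := eventually_atTop.1 (key (ε/4) (by linarith))
  refine ⟨N, fun n hn => ?_⟩
  have h2 := hN n hn
  have hbdd : BddAbove (Set.range fun x : ℝ => |g x - gn n x|) := by
    refine ⟨ε/2, ?_⟩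
    rintro _ ⟨x, rfl⟩
    exact le_trans (le_of_eq (abs_sub_comm _ _)) (by linarith [h2 x])
  have hsup : (⨆ x : ℝ, |g x - gn n x|) ≤ ε/2 := ciSup_le fun x =>
    le_trans (le_of_eq (abs_sub_comm _ _)) (by linarith [h2 x])
  have h0 : 0 ≤ ⨆ x : ℝ, |g x - gn n x| := le_ciSup_of_le hbdd 0 (abs_nonneg _)
  rw [Real.dist_eq]
  rw [abs_of_nonneg (by linarith : (0:ℝ) ≤ (⨆ x : ℝ, |g x - gn n x|) - 0)]
  linarith


open MeasureTheory ProbabilityTheory Filter Topology Set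

private lemma phi_mono {f : ℝ → ℝ} (hconv : ConvexOn ℝ Set.univ f) (φ : ℝ → ℝ)
    (hφ : ∀ x, Tendsto (fun h : ℝ => (f (x + h) - f x) / h)
      (nhdsWithin 0 (Set.Ioi 0)) (nhds (φ x))) :
    Monotone φ := by
  intro x y hxy
  rcases eq_or_lt_of_le hxy with rfl | hxy
  · exact le_rfl
  have s1 : φ x ≤ (f y - f x) / (y - x) := by
    refine le_of_tendsto (hφ x) ?_
    filter_upwards [Ioo_mem_nhdsGT (show (0:ℝ) < y - x by linarith)] with h hh
    have h0 : 0 < h := hh.1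
    have := hconv.secant_mono (a := x) (x := x + h) (y := y) trivial trivial trivial
      (by linarith : x + h ≠ x) (by intro hc; subst hc; linarith : y ≠ x) (by linarith [hh.2])
    simpa [add_sub_cancel_left] using this
  have s2 : (f y - f x) / (y - x) ≤ φ y := by
    refine ge_of_tendsto (hφ y) ?_
    filter_upwards [self_mem_nhdsWithin] with h hh
    have h0 : (0:ℝ) < h := hh
    have := hconv.slope_mono_adjacent (x := x) (y := y) (z := y + h) trivial trivial hxy
      (by linarith)
    simpa [add_sub_cancel_left] using this
  linarith

private lemma phi_abs_le {f : ℝ → ℝ} {K : ℝ} (hK : 0 ≤ K) (hLip : LipschitzWith K.toNNReal f)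
    (φ : ℝ → ℝ)
    (hφ : ∀ x, Tendsto (fun h : ℝ => (f (x + h) - f x) / h)
      (nhdsWithin 0 (Set.Ioi 0)) (nhds (φ x))) (x : ℝ) : |φ x| ≤ K := by
  refine le_of_tendsto (hφ x).abs ?_
  filter_upwards [self_mem_nhdsWithin] with h hh
  have h0 : (0:ℝ) < h := hh
  have hd : |f (x + h) - f x| ≤ K * h := by
    have := hLip.dist_le_mul (x + h) x
    rw [Real.dist_eq, Real.dist_eq, Real.coe_toNNReal K hK] at this
    simpa [abs_of_pos h0, add_sub_cancel_left] using this
  rw [abs_div, abs_of_pos h0, div_le_iff₀ h0]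
  exact hd

end Aux

/-- for a Carathéodory random convex function `f : Ξ × ℝ → ℝ` with
`f(ξ,·)` being `L(ξ)`-Lipschitz and `E[L(ξ^1)] < ∞`, and `φ(ξ,x)` the right derivative of
`f(ξ,·)` at `x`, almost surely
`sup_{x ∈ ℝ} |E[φ(ξ^1,x)] − ν⁻¹ Σ_{i≤ν} φ(ξ^i,x)| → 0`. -/
theorem stmt_16 {Ξ : Type*} [MeasurableSpace Ξ]
    {Ω : Type*} [MeasurableSpace Ω] (P : Measure Ω) [IsProbabilityMeasure P]
    (hPcomp : P.IsComplete)
    (ξ : ℕ → Ω → Ξ) (hmeas : ∀ i, Measurable (ξ i))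
    (hindep : iIndepFun ξ P)
    (hident : ∀ i, IdentDistrib (ξ i) (ξ 0) P P)
    (f : Ξ → ℝ → ℝ) (L : Ξ → ℝ)
    (hcont : ∀ t, Continuous (f t))
    (hmeasf : ∀ x, Measurable (fun t => f t x))
    (hconv : ∀ t, ConvexOn ℝ Set.univ (f t))
    (hLnn : ∀ t, 0 ≤ L t) (hLmeas : Measurable L)
    (hLip : ∀ t, LipschitzWith (L t).toNNReal (f t))
    (hLint : Integrable (fun ω => L (ξ 0 ω)) P)
    (φ : Ξ → ℝ → ℝ)
    (hφ : ∀ t x, Tendsto (fun h : ℝ => (f t (x + h) - f t x) / h)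
      (nhdsWithin 0 (Set.Ioi 0)) (nhds (φ t x))) :
    ∀ᵐ ω ∂P,
      Tendsto (fun ν : ℕ =>
          ⨆ x : ℝ,
            |(∫ ω', φ (ξ 0 ω') x ∂P) - (ν : ℝ)⁻¹ * ∑ i ∈ Finset.range ν, φ (ξ i ω) x|)
        atTop (nhds 0) := by
  classical
  -- basic facts about the right derivative φ
  have hφm : ∀ t, Monotone (φ t) := fun t => phi_mono (hconv t) _ (hφ t)
  have hφb : ∀ t x, |φ t x| ≤ L t := fun t x => phi_abs_le (hLnn t) (hLip t) _ (hφ t) x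
  have hbddb : ∀ t, BddBelow (Set.range (φ t)) := fun t =>
    ⟨-L t, by rintro _ ⟨x, rfl⟩; linarith [(abs_le.1 (hφb t x)).1]⟩
  have hbdda : ∀ t, BddAbove (Set.range (φ t)) := fun t =>
    ⟨L t, by rintro _ ⟨x, rfl⟩; linarith [(abs_le.1 (hφb t x)).2]⟩
  have hψbt : ∀ t, Tendsto (φ t) atBot (nhds (⨅ x : ℝ, φ t x)) := fun t =>
    tendsto_atBot_ciInf (hφm t) (hbddb t)
  have hψtt : ∀ t, Tendsto (φ t) atTop (nhds (⨆ x : ℝ, φ t x)) := fun t =>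
    tendsto_atTop_ciSup (hφm t) (hbdda t)
  -- auxiliary sequences
  have hu : Tendsto (fun n : ℕ => ((n:ℝ)+1)⁻¹) atTop (nhds 0) := by
    simpa [one_div] using tendsto_one_div_add_atTop_nhds_zero_nat (𝕜 := ℝ)
  have hupos : ∀ n : ℕ, (0:ℝ) < ((n:ℝ)+1)⁻¹ := fun n => by positivity
  have hu' : Tendsto (fun n : ℕ => ((n:ℝ)+1)⁻¹) atTop (nhdsWithin 0 (Set.Ioi 0)) :=
    tendsto_nhdsWithin_of_tendsto_nhds_of_eventually_within _ hu
      (Eventually.of_forall fun n => hupos n)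
  have hv : ∀ x : ℝ, Tendsto (fun n : ℕ => x - ((n:ℝ)+1)⁻¹) atTop (nhdsWithin x (Set.Iio x)) := by
    intro x
    apply tendsto_nhdsWithin_of_tendsto_nhds_of_eventually_within
    · simpa using tendsto_const_nhds.sub hu
    · exact Eventually.of_forall fun n => by
        simp only [Set.mem_Iio]; linarith [hupos n]
  have hw : ∀ x : ℝ, Tendsto (fun n : ℕ => x + ((n:ℝ)+1)⁻¹) atTop (nhdsWithin x (Set.Ioi x)) := by
    intro x
    apply tendsto_nhdsWithin_of_tendsto_nhds_of_eventually_within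
    · simpa using tendsto_const_nhds.add hu
    · exact Eventually.of_forall fun n => by
        simp only [Set.mem_Ioi]; linarith [hupos n]
  have hnegn : Tendsto (fun n : ℕ => -(n:ℝ)) atTop atBot :=
    tendsto_neg_atBot_iff.2 tendsto_natCast_atTop_atTop
  have hposn : Tendsto (fun n : ℕ => (n:ℝ)) atTop atTop := tendsto_natCast_atTop_atTop
  -- measurability in t
  have hφxmeas : ∀ x : ℝ, Measurable fun t => φ t x := by
    intro x
    exact measurable_of_tendsto_metrizable
      (fun n => ((hmeasf (x + ((n:ℝ)+1)⁻¹)).sub (hmeasf x)).div_const _)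
      (tendsto_pi_nhds.2 fun t => (hφ t x).comp hu')
  have hψlmeas : ∀ x : ℝ, Measurable fun t => Function.leftLim (φ t) x := by
    intro x
    exact measurable_of_tendsto_metrizable (fun n => hφxmeas (x - ((n:ℝ)+1)⁻¹))
      (tendsto_pi_nhds.2 fun t => ((hφm t).tendsto_leftLim x).comp (hv x))
  have hψrmeas : ∀ x : ℝ, Measurable fun t => Function.rightLim (φ t) x := by
    intro x
    exact measurable_of_tendsto_metrizable (fun n => hφxmeas (x + ((n:ℝ)+1)⁻¹))
      (tendsto_pi_nhds.2 fun t => ((hφm t).tendsto_rightLim x).comp (hw x))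
  have hψbmeas : Measurable fun t => ⨅ x : ℝ, φ t x :=
    measurable_of_tendsto_metrizable (fun n => hφxmeas (-(n:ℝ)))
      (tendsto_pi_nhds.2 fun t => (hψbt t).comp hnegn)
  have hψtmeas : Measurable fun t => ⨆ x : ℝ, φ t x :=
    measurable_of_tendsto_metrizable (fun n => hφxmeas ((n:ℝ)))
      (tendsto_pi_nhds.2 fun t => (hψtt t).comp hposn)
  -- bounds on limits
  have hψlb : ∀ t x, |Function.leftLim (φ t) x| ≤ L t := fun t x =>
    le_of_tendsto ((hφm t).tendsto_leftLim x).abs (Eventually.of_forall fun y => hφb t y)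
  have hψrb : ∀ t x, |Function.rightLim (φ t) x| ≤ L t := fun t x =>
    le_of_tendsto ((hφm t).tendsto_rightLim x).abs (Eventually.of_forall fun y => hφb t y)
  have hψbb : ∀ t, |⨅ x : ℝ, φ t x| ≤ L t := fun t =>
    le_of_tendsto (hψbt t).abs (Eventually.of_forall fun y => hφb t y)
  have hψtb : ∀ t, |⨆ x : ℝ, φ t x| ≤ L t := fun t =>
    le_of_tendsto (hψtt t).abs (Eventually.of_forall fun y => hφb t y)
  -- integrability
  have hint : ∀ h : Ξ → ℝ, Measurable h → (∀ t, |h t| ≤ L t) →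
      Integrable (fun ω => h (ξ 0 ω)) P := by
    intro h hm hb
    refine Integrable.mono hLint ((hm.comp (hmeas 0)).aestronglyMeasurable) ?_
    refine Eventually.of_forall fun ω => ?_
    rw [Real.norm_eq_abs, Real.norm_eq_abs, abs_of_nonneg (hLnn _)]
    exact hb _
  -- strong law of large numbers
  have hslln : ∀ h : Ξ → ℝ, Measurable h → (∀ t, |h t| ≤ L t) →
      ∀ᵐ ω ∂P, Tendsto (fun ν : ℕ => (ν:ℝ)⁻¹ * ∑ i ∈ Finset.range ν, h (ξ i ω)) atTop
        (nhds (∫ ω', h (ξ 0 ω') ∂P)) := by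
    intro h hm hb
    have H := strong_law_ae (X := fun i ω => h (ξ i ω)) (μ := P) (hint h hm hb)
      (fun i j hij => ((hindep.indepFun hij).comp hm hm))
      (fun i => (hident i).comp hm)
    simpa [smul_eq_mul] using H
  -- dominated convergence helper
  have hlim : ∀ (h : Ξ → ℝ) (hs : ℕ → Ξ → ℝ), Measurable h → (∀ n, Measurable (hs n)) →
      (∀ n t, |hs n t| ≤ L t) → (∀ t, Tendsto (fun n => hs n t) atTop (nhds (h t))) →
      Tendsto (fun n => ∫ ω', hs n (ξ 0 ω') ∂P) atTop (nhds (∫ ω', h (ξ 0 ω') ∂P)) := by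
    intro h hs hm hsm hsb hconv'
    refine tendsto_integral_of_dominated_convergence (fun ω => L (ξ 0 ω))
      (fun n => ((hsm n).comp (hmeas 0)).aestronglyMeasurable) hLint
      (fun n => Eventually.of_forall fun ω => ?_) (Eventually.of_forall fun ω => hconv' _)
    rw [Real.norm_eq_abs]
    exact hsb n _
  -- monotonicity of the expectation function
  have hgmono : Monotone (fun x => ∫ ω', φ (ξ 0 ω') x ∂P) := fun x y hxy =>
    integral_mono (hint _ (hφxmeas x) fun t => hφb t x) (hint _ (hφxmeas y) fun t => hφb t y)
      fun ω => hφm _ hxy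
  -- one-sided limits of the expectation function
  have hgl : ∀ x : ℝ, Tendsto (fun x' => ∫ ω', φ (ξ 0 ω') x' ∂P) (nhdsWithin x (Set.Iio x))
      (nhds (∫ ω', Function.leftLim (φ (ξ 0 ω')) x ∂P)) := by
    intro x
    have t2 := hgmono.tendsto_leftLim x
    have t1 : Tendsto (fun n : ℕ => ∫ ω', φ (ξ 0 ω') (x - ((n:ℝ)+1)⁻¹) ∂P) atTop
        (nhds (∫ ω', Function.leftLim (φ (ξ 0 ω')) x ∂P)) :=
      hlim (fun t => Function.leftLim (φ t) x) (fun n t => φ t (x - ((n:ℝ)+1)⁻¹))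
        (hψlmeas x) (fun n => hφxmeas _) (fun n t => hφb t _)
        (fun t => ((hφm t).tendsto_leftLim x).comp (hv x))
    have heq := tendsto_nhds_unique (t2.comp (hv x)) t1
    rwa [heq] at t2
  have hgr : ∀ x : ℝ, Tendsto (fun x' => ∫ ω', φ (ξ 0 ω') x' ∂P) (nhdsWithin x (Set.Ioi x))
      (nhds (∫ ω', Function.rightLim (φ (ξ 0 ω')) x ∂P)) := by
    intro x
    have t2 := hgmono.tendsto_rightLim x
    have t1 : Tendsto (fun n : ℕ => ∫ ω', φ (ξ 0 ω') (x + ((n:ℝ)+1)⁻¹) ∂P) atTop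
        (nhds (∫ ω', Function.rightLim (φ (ξ 0 ω')) x ∂P)) :=
      hlim (fun t => Function.rightLim (φ t) x) (fun n t => φ t (x + ((n:ℝ)+1)⁻¹))
        (hψrmeas x) (fun n => hφxmeas _) (fun n t => hφb t _)
        (fun t => ((hφm t).tendsto_rightLim x).comp (hw x))
    have heq := tendsto_nhds_unique (t2.comp (hw x)) t1
    rwa [heq] at t2
  -- limits at ∓∞ of the expectation function
  have hgbddb : BddBelow (Set.range fun x => ∫ ω', φ (ξ 0 ω') x ∂P) := by
    refine ⟨-(∫ ω', L (ξ 0 ω') ∂P), ?_⟩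
    rintro _ ⟨x, rfl⟩
    have h1 : ∫ ω', (-L (ξ 0 ω')) ∂P ≤ ∫ ω', φ (ξ 0 ω') x ∂P :=
      integral_mono hLint.neg (hint _ (hφxmeas x) fun t => hφb t x)
        fun ω => (abs_le.1 (hφb _ x)).1
    rwa [integral_neg] at h1
  have hgbdda : BddAbove (Set.range fun x => ∫ ω', φ (ξ 0 ω') x ∂P) := by
    refine ⟨∫ ω', L (ξ 0 ω') ∂P, ?_⟩
    rintro _ ⟨x, rfl⟩
    exact integral_mono (hint _ (hφxmeas x) fun t => hφb t x) hLint
      fun ω => (abs_le.1 (hφb _ x)).2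
  have hgb : Tendsto (fun x => ∫ ω', φ (ξ 0 ω') x ∂P) atBot
      (nhds (∫ ω', (⨅ x : ℝ, φ (ξ 0 ω') x) ∂P)) := by
    have t2 := tendsto_atBot_ciInf hgmono hgbddb
    have t1 : Tendsto (fun n : ℕ => ∫ ω', φ (ξ 0 ω') (-(n:ℝ)) ∂P) atTop
        (nhds (∫ ω', (⨅ x : ℝ, φ (ξ 0 ω') x) ∂P)) :=
      hlim (fun t => ⨅ x : ℝ, φ t x) (fun n t => φ t (-(n:ℝ))) hψbmeas (fun n => hφxmeas _)
        (fun n t => hφb t _) (fun t => (hψbt t).comp hnegn)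
    have heq := tendsto_nhds_unique (t2.comp hnegn) t1
    rwa [heq] at t2
  have hgt : Tendsto (fun x => ∫ ω', φ (ξ 0 ω') x ∂P) atTop
      (nhds (∫ ω', (⨆ x : ℝ, φ (ξ 0 ω') x) ∂P)) := by
    have t2 := tendsto_atTop_ciSup hgmono hgbdda
    have t1 : Tendsto (fun n : ℕ => ∫ ω', φ (ξ 0 ω') ((n:ℝ)) ∂P) atTop
        (nhds (∫ ω', (⨆ x : ℝ, φ (ξ 0 ω') x) ∂P)) :=
      hlim (fun t => ⨆ x : ℝ, φ t x) (fun n t => φ t ((n:ℝ))) hψtmeas (fun n => hφxmeas _)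
        (fun n t => hφb t _) (fun t => (hψtt t).comp hposn)
    have heq := tendsto_nhds_unique (t2.comp hposn) t1
    rwa [heq] at t2
  -- the countable set of test points
  set D : Set ℝ := {x | ¬ ContinuousAt (fun x' => ∫ ω', φ (ξ 0 ω') x' ∂P) x} ∪
    Set.range ((↑) : ℚ → ℝ) with hDdef
  have hDc : D.Countable :=
    (hgmono.countable_not_continuousAt).union (Set.countable_range _)
  -- almost sure convergences
  have ae1 : ∀ᵐ ω ∂P, ∀ x ∈ D,
      Tendsto (fun ν : ℕ => (ν:ℝ)⁻¹ * ∑ i ∈ Finset.range ν, φ (ξ i ω) x) atTop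
        (nhds (∫ ω', φ (ξ 0 ω') x ∂P)) ∧
      Tendsto (fun ν : ℕ => (ν:ℝ)⁻¹ * ∑ i ∈ Finset.range ν, Function.leftLim (φ (ξ i ω)) x)
        atTop (nhds (∫ ω', Function.leftLim (φ (ξ 0 ω')) x ∂P)) ∧
      Tendsto (fun ν : ℕ => (ν:ℝ)⁻¹ * ∑ i ∈ Finset.range ν, Function.rightLim (φ (ξ i ω)) x)
        atTop (nhds (∫ ω', Function.rightLim (φ (ξ 0 ω')) x ∂P)) := by
    rw [ae_ball_iff hDc]
    intro x _
    filter_upwards [hslln _ (hφxmeas x) (fun t => hφb t x),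
      hslln _ (hψlmeas x) (fun t => hψlb t x),
      hslln _ (hψrmeas x) (fun t => hψrb t x)] with ω h1 h2 h3
    exact ⟨h1, h2, h3⟩
  have ae2 := hslln _ hψbmeas hψbb
  have ae3 := hslln _ hψtmeas hψtb
  filter_upwards [ae1, ae2, ae3] with ω h1 h2 h3
  exact unif_tendsto
    (fun x => ∫ ω', φ (ξ 0 ω') x ∂P)
    (fun x => ∫ ω', Function.leftLim (φ (ξ 0 ω')) x ∂P)
    (fun x => ∫ ω', Function.rightLim (φ (ξ 0 ω')) x ∂P)
    (∫ ω', (⨅ x : ℝ, φ (ξ 0 ω') x) ∂P)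
    (∫ ω', (⨆ x : ℝ, φ (ξ 0 ω') x) ∂P)
    (fun ν x => (ν:ℝ)⁻¹ * ∑ i ∈ Finset.range ν, φ (ξ i ω) x)
    (fun ν x => (ν:ℝ)⁻¹ * ∑ i ∈ Finset.range ν, Function.leftLim (φ (ξ i ω)) x)
    (fun ν x => (ν:ℝ)⁻¹ * ∑ i ∈ Finset.range ν, Function.rightLim (φ (ξ i ω)) x)
    (fun ν => (ν:ℝ)⁻¹ * ∑ i ∈ Finset.range ν, ⨅ x : ℝ, φ (ξ i ω) x)
    (fun ν => (ν:ℝ)⁻¹ * ∑ i ∈ Finset.range ν, ⨆ x : ℝ, φ (ξ i ω) x)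
    hgmono
    (fun ν x y hxy => mul_le_mul_of_nonneg_left
      (Finset.sum_le_sum fun i _ => hφm _ hxy) (inv_nonneg.2 (Nat.cast_nonneg ν)))
    hgl hgr hgb hgt
    (fun ν x => (tendsto_finset_sum _ fun i _ => (hφm _).tendsto_leftLim x).const_mul _)
    (fun ν x => (tendsto_finset_sum _ fun i _ => (hφm _).tendsto_rightLim x).const_mul _)
    (fun ν => (tendsto_finset_sum _ fun i _ => hψbt _).const_mul _)
    (fun ν => (tendsto_finset_sum _ fun i _ => hψtt _).const_mul _)
    D Set.subset_union_right Set.subset_union_left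
    (fun x hx => (h1 x hx).1) (fun x hx => (h1 x hx).2.1) (fun x hx => (h1 x hx).2.2)
    h2 h3
end
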